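/- arXiv:2211.08087 — 8 statements merged into one kernel-verified Lean document; each statement's English description precedes it below -/
import Mathlib

section
/- Let p be a prime and k ≥ 0 an integer. Let t_1, …, t_m be positive integers whose p-adic valuations satisfy ν_p(t_i) ≤ k for every i, with ν_p(t_i) = k for at least one i. Set m_l = #{i : ν_p(t_i) = l} for 0 ≤ l ≤ k and δ = ∑_{l=0}^k p^l·m_l − (p^k − 1). Then for all integers j ≥ 0 and n with n ≥ j + 1 + δ, the image of the polynomial (∏_{i=1}^m (1 − X^{t_i}))·(1 − X)^j under the quotient map ℤ[X] → ℤ[X]/(1 − X^{p^{k+1}}, (1 − X)^n) is nonzero. -/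
/-!
Suppose `F = (∏ i, (1 - X ^ t i)) * (1 - X) ^ j` lies in the ideal
`(1 - X ^ p ^ (k + 1), (1 - X) ^ n)`.
Some `t i` is divisible by `p ^ k`, so `X ^ p ^ k - 1` divides `F` as well as `1 - X ^ p ^ (k + 1)`;
hence the geometric sum `G = 1 + X + ⋯ + X ^ (p ^ k - 1)`, which is prime to `1 - X`, divides the
coefficient of `(1 - X) ^ n`. Evaluating at a primitive `p ^ (k + 1)`-th root of unity `ζ`
and multiplying by `1 - ζ` gives `(1 - ζ) F(ζ) = (1 - ζ ^ p ^ k) (1 - ζ) ^ n c` with `c` an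
algebraic integer. Since `|N(1 - ζ ^ t)| = p ^ p ^ ν_p(t)`, taking norms yields
`p ^ k + n ≤ 1 + j + ∑ i, p ^ ν_p(t i)`, i.e. `n ≤ j + δ`.
-/

open Polynomial Finset

theorem Finset.sum_range_mul_card_filter_eq {ι M : Type*} [CommSemiring M] (s : Finset ι)
    (g : ι → ℕ) {N : ℕ} (hg : ∀ i ∈ s, g i < N) (f : ℕ → M) :
    ∑ l ∈ range N, f l * (#{i ∈ s | g i = l} : M) = ∑ i ∈ s, f (g i) := by
  rw [← sum_fiberwise_of_maps_to (fun i hi => mem_range.mpr (hg i hi))]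
  refine sum_congr rfl fun l _ => ?_
  rw [sum_congr rfl fun i hi => by rw [(mem_filter.mp hi).2], sum_const, nsmul_eq_mul, mul_comm]

theorem pow_sub_one_dvd_one_sub_pow {R : Type*} [Ring R] (x : R) {N t : ℕ} (h : N ∣ t) :
    x ^ N - 1 ∣ 1 - x ^ t := by
  obtain ⟨d, rfl⟩ := h
  rw [← neg_sub (x ^ (N * d)), dvd_neg]
  exact pow_one_sub_dvd_pow_mul_sub_one x N d

namespace Polynomial

variable {R : Type*} [CommRing R] [IsDomain R]

theorem dvd_of_dvd_mul_one_sub_X_pow [UniqueFactorizationMonoid R] {G A : R[X]} {n : ℕ}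
    (hG : G.eval 1 ≠ 0) (h : G ∣ A * (1 - X) ^ n) : G ∣ A := by
  have hprime : Prime (1 - X : R[X]) := by simpa using (prime_X_sub_C (1 : R)).neg
  refine (IsRelPrime.pow_right ?_).dvd_of_dvd_mul_right h
  refine (hprime.irreducible.isRelPrime_iff_not_dvd.mpr fun hdvd => hG ?_).symm
  exact dvd_iff_isRoot.mp (by simpa using hdvd.neg_left)

theorem mem_span_geom_sum_mul [UniqueFactorizationMonoid R] [CharZero R] {N M n : ℕ}
    (hN : N ≠ 0) (hNM : N ∣ M) {F : R[X]} (hF : X ^ N - 1 ∣ F)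
    (hmem : F ∈ Ideal.span {1 - X ^ M, (1 - X) ^ n}) :
    F ∈ Ideal.span {1 - X ^ M, (∑ i ∈ range N, X ^ i) * (1 - X) ^ n} := by
  obtain ⟨B, A, rfl⟩ := Ideal.mem_span_pair.mp hmem
  have hG : (∑ i ∈ range N, X ^ i : R[X]) ∣ X ^ N - 1 := ⟨X - 1, (geom_sum_mul X N).symm⟩
  have hGA : (∑ i ∈ range N, X ^ i : R[X]) ∣ A * (1 - X) ^ n := by
    have hGM := (hG.trans (pow_sub_one_dvd_one_sub_pow X hNM)).mul_left B
    simpa using dvd_sub (hG.trans hF) hGM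
  obtain ⟨C, rfl⟩ := dvd_of_dvd_mul_one_sub_X_pow (by simpa [eval_geom_sum]) hGA
  exact Ideal.mem_span_pair.mpr ⟨B, C, by ring⟩

end Polynomial

section Norm

variable {K : Type*} [Field K] [Algebra ℚ K]

theorem abs_norm_one_sub (x : K) : |Algebra.norm ℚ (1 - x)| = |Algebra.norm ℚ (x - 1)| := by
  have hneg : (-1 : K) = algebraMap ℚ K (-1) := by simp
  rw [← neg_sub, ← neg_one_mul, map_mul, abs_mul, hneg, Algebra.norm_algebraMap, abs_pow,
    abs_neg, abs_one, one_pow, one_mul]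

theorem le_of_abs_norm_mul_eq_pow {p : ℕ} (hp : 1 < p) {x y : K} (hy : IsIntegral ℤ y)
    {a b : ℕ} (hx : |Algebra.norm ℚ x| = p ^ a) (hxy : |Algebra.norm ℚ (x * y)| = p ^ b) :
    a ≤ b := by
  obtain ⟨c, hc⟩ := IsIntegrallyClosed.isIntegral_iff.mp (Algebra.isIntegral_norm ℚ hy)
  rw [map_mul, abs_mul, hx, ← hc, eq_intCast, ← Int.cast_abs] at hxy
  have hc : 1 ≤ |c| := Int.one_le_abs fun hc0 => by
    simp [hc0, eq_comm, (zero_lt_one.trans hp).ne'] at hxy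
  refine (pow_le_pow_iff_right₀ (by exact_mod_cast hp : (1 : ℚ) < p)).mp ?_
  exact hxy ▸ le_mul_of_one_le_right (by positivity) (by exact_mod_cast hc)

variable {p k : ℕ} [hp : Fact p.Prime] [IsCyclotomicExtension {p ^ (k + 1)} ℚ K] {ζ : K}

theorem IsPrimitiveRoot.abs_norm_pow_prime_pow_sub_one (hζ : IsPrimitiveRoot ζ (p ^ (k + 1)))
    {s : ℕ} (hs : s ≤ k) : |Algebra.norm ℚ (ζ ^ p ^ s - 1)| = p ^ p ^ s := by
  have hirr := cyclotomic.irreducible_rat (pow_pos hp.out.pos (k + 1))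
  by_cases htwo : p ^ (k - s + 1) = 2
  -- then `ζ ^ p ^ s = -1` and the norm is `(-2) ^ 2 ^ k`, negative when `K = ℚ`
  · obtain ⟨rfl, hks⟩ := Nat.prime_two.pow_eq_iff.mp htwo
    obtain rfl : s = k := by omega
    simp [hζ.norm_pow_sub_one_two hirr]
  · rw [hζ.norm_pow_sub_one_of_prime_pow_ne_two hirr hs htwo,
      abs_of_pos (pow_pos (by exact_mod_cast hp.out.pos) _)]

theorem IsPrimitiveRoot.abs_norm_one_sub_pow (hζ : IsPrimitiveRoot ζ (p ^ (k + 1))) {t : ℕ}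
    (ht : t ≠ 0) (htk : padicValNat p t ≤ k) :
    |Algebra.norm ℚ (1 - ζ ^ t)| = p ^ p ^ padicValNat p t := by
  have hcop : (ordCompl[p] t).Coprime (p ^ (k + 1)) :=
    ((Nat.coprime_ordCompl hp.out ht).pow_left (k + 1)).symm
  have ht' : ζ ^ t = (ζ ^ ordCompl[p] t) ^ p ^ padicValNat p t := by
    rw [← pow_mul, mul_comm, ← Nat.factorization_def t hp.out, Nat.ordProj_mul_ordCompl_eq_self]
  rw [ht', abs_norm_one_sub, (hζ.pow_of_coprime _ hcop).abs_norm_pow_prime_pow_sub_one htk]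

theorem IsPrimitiveRoot.abs_norm_one_sub_self (hζ : IsPrimitiveRoot ζ (p ^ (k + 1))) :
    |Algebra.norm ℚ (1 - ζ)| = p := by
  simpa using hζ.abs_norm_one_sub_pow one_ne_zero (by simp)

theorem IsPrimitiveRoot.abs_norm_prod_one_sub_pow (hζ : IsPrimitiveRoot ζ (p ^ (k + 1)))
    {ι : Type*} (s : Finset ι) {t : ι → ℕ} (ht : ∀ i ∈ s, t i ≠ 0)
    (htk : ∀ i ∈ s, padicValNat p (t i) ≤ k) :
    |Algebra.norm ℚ (∏ i ∈ s, (1 - ζ ^ t i))| =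
      p ^ ∑ i ∈ s, p ^ padicValNat p (t i) := by
  rw [map_prod, abs_prod, ← prod_pow_eq_pow_sum]
  exact prod_congr rfl fun i hi => hζ.abs_norm_one_sub_pow (ht i hi) (htk i hi)

theorem IsPrimitiveRoot.pow_add_le_of_mem_span (hζ : IsPrimitiveRoot ζ (p ^ (k + 1)))
    {ι : Type*} (s : Finset ι) {t : ι → ℕ} (ht : ∀ i ∈ s, t i ≠ 0)
    (htk : ∀ i ∈ s, padicValNat p (t i) ≤ k) {j n : ℕ}
    (hF : (∏ i ∈ s, (1 - X ^ t i)) * (1 - X) ^ j ∈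
      Ideal.span {1 - X ^ p ^ (k + 1), (∑ i ∈ range (p ^ k), X ^ i) * (1 - X : ℤ[X]) ^ n}) :
    p ^ k + n ≤ ∑ i ∈ s, p ^ padicValNat p (t i) + j + 1 := by
  obtain ⟨B, C, hBC⟩ := Ideal.mem_span_pair.mp hF
  have heval : (1 - ζ) * ((∏ i ∈ s, (1 - ζ ^ t i)) * (1 - ζ) ^ j) =
      (1 - ζ ^ p ^ k) * (1 - ζ) ^ n * aeval ζ C := by
    have := congrArg (aeval ζ) hBC
    simp only [map_add, map_mul, map_sub, map_one, map_pow, map_sum, map_prod, aeval_X,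
      hζ.pow_eq_one, sub_self, mul_zero, zero_add] at this
    rw [← this, ← mul_neg_geom_sum]
    ring
  have hC : IsIntegral ℤ (aeval ζ C) :=
    adjoin_le_integralClosure (hζ.isIntegral (pow_pos hp.out.pos _))
      (aeval_mem_adjoin_singleton _ _)
  have hζₖ : |Algebra.norm ℚ (1 - ζ ^ p ^ k)| = p ^ p ^ k := by
    simpa using hζ.abs_norm_one_sub_pow (pow_ne_zero k hp.out.ne_zero) (by simp)
  refine le_of_abs_norm_mul_eq_pow (x := (1 - ζ ^ p ^ k) * (1 - ζ) ^ n) hp.out.one_lt hC ?_ ?_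
  · rw [map_mul, map_pow, abs_mul, abs_pow, hζₖ, hζ.abs_norm_one_sub_self, pow_add]
  · rw [← heval, map_mul, map_mul, map_pow, abs_mul, abs_mul, abs_pow,
      hζ.abs_norm_prod_one_sub_pow s ht htk, hζ.abs_norm_one_sub_self, pow_succ, pow_add]
    ring

end Norm

/-- Lemma 4.1 of Crabb, "A Borsuk–Ulam theorem for cyclic p-groups".
Let `p` be a prime, `k ≥ 0`, and `t 1, …, t m` positive integers with `ν_p(t i) ≤ k` for all
`i` and `ν_p(t i) = k` for some `i`.  With `m_l = #{i : ν_p(t i) = l}` and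
`δ = ∑_{l=0}^k p^l m_l − (p^k − 1)`, for all `j ≥ 0` and `n ≥ j + 1 + δ` the image of
`(∏ i (1 − X^(t i))) (1 − X)^j` in `ℤ[X]/(1 − X^(p^(k+1)), (1 − X)^n)` is nonzero. -/
theorem stmt0 (p : ℕ) (hp : p.Prime) (k m : ℕ) (t : Fin m → ℕ)
    (ht : ∀ i, 0 < t i)
    (hle : ∀ i, padicValNat p (t i) ≤ k)
    (hex : ∃ i, padicValNat p (t i) = k)
    (j n : ℕ)
    (hn : (j : ℤ) + 1 +
        ((∑ l ∈ Finset.range (k + 1), (p : ℤ) ^ l *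
            ((Finset.univ.filter fun i => padicValNat p (t i) = l).card : ℤ)) -
          ((p : ℤ) ^ k - 1)) ≤ (n : ℤ)) :
    Ideal.Quotient.mk (Ideal.span {1 - (X : ℤ[X]) ^ p ^ (k + 1), (1 - X) ^ n})
      ((∏ i, (1 - X ^ t i)) * (1 - X) ^ j) ≠ 0 := by
  have := Fact.mk hp
  rw [Ne, Ideal.Quotient.eq_zero_iff_mem]
  intro hmem
  have hdvd : X ^ p ^ k - 1 ∣ (∏ i, (1 - X ^ t i)) * (1 - X : ℤ[X]) ^ j := by
    obtain ⟨i₀, hi₀⟩ := hex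
    have hpk : p ^ k ∣ t i₀ := hi₀ ▸ pow_padicValNat_dvd
    exact ((pow_sub_one_dvd_one_sub_pow X hpk).trans (dvd_prod_of_mem _ (mem_univ i₀))).mul_right _
  have : NeZero (p ^ (k + 1)) := ⟨pow_ne_zero _ hp.ne_zero⟩
  have : IsCyclotomicExtension {p ^ (k + 1)} ℚ (CyclotomicField (p ^ (k + 1)) ℚ) :=
    CyclotomicField.isCyclotomicExtension _ _
  have hζ := IsCyclotomicExtension.zeta_spec (p ^ (k + 1)) ℚ (CyclotomicField (p ^ (k + 1)) ℚ)
  have hexp := hζ.pow_add_le_of_mem_span univ (fun i _ => (ht i).ne') (fun i _ => hle i)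
    (mem_span_geom_sum_mul (pow_ne_zero k hp.ne_zero) (pow_dvd_pow p k.le_succ) hdvd hmem)
  rw [sum_range_mul_card_filter_eq _ _ (fun i _ => Nat.lt_succ_of_le (hle i))] at hn
  linarith
end

section
/- Let p be a prime and k ≥ 0 an integer, and write Φ(X) = ∑_{i=0}^{p−1} X^{i·p^k} ∈ ℤ[X], so that 1 − X^{p^{k+1}} = (1 − X^{p^k})·Φ(X). Let e_0, …, e_k and j be nonnegative integers. Then the image of the polynomial (∏_{l=0}^k (1 − X^{p^l})^{e_l})·(1 − X)^j in the quotient ring ℤ_(p)[X]/(Φ(X), (1 − X)^{j + ∑_{l=0}^k e_l·p^l + 1}) is nonzero. -/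
/-!
Write `x` for the image of `X` in the quotient and `z = 1 - x`, which is nilpotent there.
Modulo `p`, `Φ` is the cyclotomic polynomial `Φ_{p^(k+1)} ≡ (X - 1)^d` with `d = p^(k+1) - p^k`,
and `Φ(1) = p`; so `Φ(x) = 0` makes `p` equal to `z^d` times a unit. Likewise
`1 - X^(p^l) ≡ (1 - X)^(p^l)` modulo `p (X - 1)`, so for `l ≤ k` the element `1 - x^(p^l)` is
`z^(p^l)` times a unit. Hence the product is `z^N` times a unit, `N = j + ∑ e_l p^l`, and it
vanishes only if `(1 - X)^N ∈ (Φ, (1 - X)^(N+1))`. Since `X - 1` does not divide `Φ`, cancelling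
`(1 - X)^N` and evaluating at `1` would then make `p` a unit.
-/

open Polynomial Finset

/-- The ideal `(p) ⊆ ℤ` is prime when `p` is a natural prime. -/
instance intSpanNatPrime (p : ℕ) [hp : Fact p.Prime] : (Ideal.span {(p : ℤ)}).IsPrime :=
  (Ideal.span_singleton_prime (by exact_mod_cast hp.out.ne_zero)).mpr
    (Nat.prime_iff_prime_int.mp hp.out)

/-- `ℤ_(p)`: the localization of `ℤ` at the prime ideal `(p)`. -/
abbrev IntLocAtPrime (p : ℕ) [Fact p.Prime] : Type :=
  Localization.AtPrime (Ideal.span {(p : ℤ)})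

namespace IntLocAtPrime

variable (p : ℕ) [Fact p.Prime]

theorem natCast_ne_zero : (p : IntLocAtPrime p) ≠ 0 := by
  have hinj := IsLocalization.injective (IntLocAtPrime p)
    (Ideal.span {(p : ℤ)}).primeCompl_le_nonZeroDivisors
  rw [← map_natCast (algebraMap ℤ (IntLocAtPrime p)), ← (algebraMap ℤ _).map_zero, hinj.ne_iff]
  exact_mod_cast (Fact.out : p.Prime).ne_zero

theorem not_isUnit_natCast : ¬IsUnit (p : IntLocAtPrime p) := by
  have h := IsLocalization.AtPrime.isUnit_to_map_iff (IntLocAtPrime p) (Ideal.span {(p : ℤ)}) p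
  rw [map_natCast] at h
  exact fun hu => h.mp hu (Ideal.mem_span_singleton_self _)

end IntLocAtPrime

theorem Polynomial.exists_eq_add_C_mul_of_map_zmod_eq (p : ℕ) [Fact p.Prime] {f g : ℤ[X]} {c : ℤ}
    (hmod : f.map (Int.castRingHom (ZMod p)) = g.map (Int.castRingHom (ZMod p)))
    (hone : f.eval 1 = g.eval 1 + p * c) :
    ∃ V : ℤ[X], f = g + C (p : ℤ) * (C c + (X - 1) * V) := by
  obtain ⟨W, hW⟩ : C (p : ℤ) ∣ f - g := by
    rw [C_dvd_iff_dvd_coeff]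
    intro i
    rw [← ZMod.intCast_zmod_eq_zero_iff_dvd, coeff_sub, Int.cast_sub, sub_eq_zero]
    simpa only [coeff_map, eq_intCast] using congrArg (coeff · i) hmod
  have hW1 : W.eval 1 = c := by
    have h := congrArg (eval 1) hW
    rw [eval_sub, hone, eval_mul, eval_C] at h
    exact mul_left_cancel₀ (Int.natCast_ne_zero.mpr (Fact.out : p.Prime).ne_zero)
      (by linear_combination -h)
  obtain ⟨V, hV⟩ : X - C 1 ∣ W - C c := by
    rw [dvd_iff_isRoot, IsRoot, eval_sub, eval_C, hW1, sub_self]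
  exact ⟨V, by rw [C_1] at hV; linear_combination hW + C (p : ℤ) * hV⟩

theorem Polynomial.exists_cyclotomic_prime_pow_eq_X_sub_one_pow_add (p : ℕ) [Fact p.Prime] (k : ℕ) :
    ∃ V : ℤ[X], cyclotomic (p ^ (k + 1)) ℤ =
      (X - 1) ^ (p ^ (k + 1) - p ^ k) + C (p : ℤ) * (1 + (X - 1) * V) := by
  have hmod : (cyclotomic (p ^ (k + 1)) ℤ).map (Int.castRingHom (ZMod p)) =
      ((X - 1) ^ (p ^ (k + 1) - p ^ k) : ℤ[X]).map (Int.castRingHom (ZMod p)) := by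
    rw [map_cyclotomic, ← mul_one (p ^ (k + 1)), cyclotomic_mul_prime_pow_eq (ZMod p)
      (Nat.Prime.not_dvd_one Fact.out) k.succ_pos, cyclotomic_one]
    simp
  have hd : p ^ (k + 1) - p ^ k ≠ 0 :=
    (Nat.sub_pos_of_lt (Nat.pow_lt_pow_right (Nat.Prime.one_lt Fact.out) k.lt_succ_self)).ne'
  obtain ⟨V, hV⟩ := exists_eq_add_C_mul_of_map_zmod_eq p hmod (c := 1) (by
    rw [eval_one_cyclotomic_prime_pow, eval_pow, eval_sub, eval_X, eval_one, sub_self,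
      zero_pow hd, zero_add, mul_one])
  exact ⟨V, by rw [hV, C_1]⟩

theorem Polynomial.exists_one_sub_X_pow_prime_pow_eq_one_sub_X_pow_add (p : ℕ) [Fact p.Prime]
    (n : ℕ) :
    ∃ V : ℤ[X], (1 - X ^ p ^ n : ℤ[X]) = (1 - X) ^ p ^ n + C (p : ℤ) * ((X - 1) * V) := by
  have hmod : (1 - X ^ p ^ n : ℤ[X]).map (Int.castRingHom (ZMod p)) =
      ((1 - X) ^ p ^ n : ℤ[X]).map (Int.castRingHom (ZMod p)) := by
    simp only [Polynomial.map_sub, Polynomial.map_pow, Polynomial.map_one, map_X, sub_pow_char_pow,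
      one_pow]
  obtain ⟨V, hV⟩ := exists_eq_add_C_mul_of_map_zmod_eq p hmod (c := 0)
    (by simp [zero_pow, (Fact.out : p.Prime).ne_zero])
  exact ⟨V, by rw [hV, C_0, zero_add]⟩

theorem IsNilpotent.associated_pow_add_pow_mul {A : Type*} [CommRing A] {z : A}
    (hz : IsNilpotent z) {m n : ℕ} (hmn : m < n) (c : A) :
    Associated (z ^ m) (z ^ m + z ^ n * c) := by
  obtain ⟨r, rfl⟩ : ∃ r, n = m + r + 1 := ⟨n - m - 1, by omega⟩
  have hunit : IsUnit (1 + z * (z ^ r * c)) :=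
    ((Commute.all _ _).isNilpotent_mul_right hz).isUnit_one_add
  rw [show z ^ m + z ^ (m + r + 1) * c = (1 + z * (z ^ r * c)) * z ^ m by ring]
  exact associated_unit_mul_right _ _ hunit

section NilpotentRootOfCyclotomic

variable {A : Type*} [CommRing A] {p : ℕ} [hp : Fact p.Prime] {k : ℕ} {x : A}

theorem associated_one_sub_pow_natCast (hΦ : ∑ i ∈ range p, x ^ (i * p ^ k) = 0)
    (hx : IsNilpotent (1 - x)) : Associated ((1 - x) ^ (p ^ (k + 1) - p ^ k)) (p : A) := by
  obtain ⟨V, hV⟩ := exists_cyclotomic_prime_pow_eq_X_sub_one_pow_add p k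
  have h := congrArg (aeval x) hV
  simp only [cyclotomic_prime_pow_eq_geom_sum hp.out, map_sum, map_add, map_mul, map_pow, map_sub,
    map_one, aeval_X, map_natCast] at h
  rw [show ∑ i ∈ range p, (x ^ p ^ k) ^ i = 0 by simpa only [← pow_mul, mul_comm] using hΦ] at h
  have hunit : IsUnit (1 + (x - 1) * aeval x V) :=
    ((Commute.all _ _).isNilpotent_mul_right (by simpa only [neg_sub] using hx.neg)).isUnit_one_add
  have hsign : Associated ((1 - x) ^ (p ^ (k + 1) - p ^ k)) ((x - 1) ^ (p ^ (k + 1) - p ^ k)) := by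
    rw [← neg_sub x 1]
    exact (Associated.refl _).neg_left.pow_pow
  refine hsign.trans (Associated.trans ?_ (associated_mul_unit_left _ _ hunit))
  rw [eq_neg_of_add_eq_zero_right h.symm]
  exact (Associated.refl _).neg_right

theorem associated_one_sub_pow_one_sub_pow_prime_pow (hΦ : ∑ i ∈ range p, x ^ (i * p ^ k) = 0)
    (hx : IsNilpotent (1 - x)) {l : ℕ} (hl : l ≤ k) :
    Associated ((1 - x) ^ p ^ l) (1 - x ^ p ^ l) := by
  obtain ⟨g, hg⟩ := exists_one_sub_X_pow_prime_pow_eq_one_sub_X_pow_add p l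
  have h := congrArg (aeval x) hg
  simp only [map_sub, map_one, map_pow, aeval_X, map_add, map_mul, map_natCast] at h
  obtain ⟨u, hu⟩ := associated_one_sub_pow_natCast hΦ hx
  have hlt : p ^ l < p ^ (k + 1) - p ^ k + 1 := by
    have hle : p ^ l ≤ p ^ k := Nat.pow_le_pow_right hp.out.pos hl
    have hdouble : 2 * p ^ k ≤ p ^ (k + 1) := by
      rw [pow_succ, mul_comm 2]; exact Nat.mul_le_mul_left _ hp.out.two_le
    omega
  rw [h, ← hu]
  convert hx.associated_pow_add_pow_mul hlt (-(u * aeval x g)) using 1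
  ring

theorem associated_one_sub_pow_prod_one_sub_pow (hΦ : ∑ i ∈ range p, x ^ (i * p ^ k) = 0)
    (hx : IsNilpotent (1 - x)) (e : ℕ → ℕ) (j : ℕ) :
    Associated ((1 - x) ^ (j + ∑ l ∈ range (k + 1), e l * p ^ l))
      ((∏ l ∈ range (k + 1), (1 - x ^ p ^ l) ^ e l) * (1 - x) ^ j) := by
  rw [pow_add, mul_comm, ← prod_pow_eq_pow_sum]
  refine Associated.mul_mul (Associated.prod _ _ _ fun l hl => ?_) (Associated.refl _)
  rw [mul_comm, pow_mul]
  exact (associated_one_sub_pow_one_sub_pow_prime_pow hΦ hx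
    (Nat.lt_succ_iff.mp (mem_range.mp hl))).pow_pow

end NilpotentRootOfCyclotomic

theorem Polynomial.C_sub_X_pow_notMem_span {R : Type*} [CommRing R] [IsDomain R] {r : R}
    {f : R[X]} (hf₀ : f.eval r ≠ 0) (hf : ¬IsUnit (f.eval r)) (n : ℕ) :
    (C r - X) ^ n ∉ Ideal.span {f, (C r - X) ^ (n + 1)} := by
  intro hmem
  obtain ⟨a, b, hab⟩ := Ideal.mem_span_pair.mp hmem
  have hπ : Prime (C r - X) := by simpa only [neg_sub] using (prime_X_sub_C r).neg
  have hπf : ¬C r - X ∣ f := by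
    rw [← neg_sub, neg_dvd, dvd_iff_isRoot]
    exact hf₀
  have hdvd : a * f = (C r - X) ^ n * (1 - b * (C r - X)) := by linear_combination hab
  obtain ⟨a₁, rfl⟩ := hπ.pow_dvd_of_dvd_mul_right n hπf ⟨_, hdvd⟩
  have hcancel : a₁ * f = 1 - b * (C r - X) :=
    mul_left_cancel₀ (pow_ne_zero n hπ.ne_zero) (by linear_combination hab)
  have heval := congrArg (eval r) hcancel
  simp only [eval_mul, eval_sub, eval_one, eval_C, eval_X, sub_self, mul_zero, sub_zero] at heval
  exact hf (IsUnit.of_mul_eq_one_right _ heval)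

theorem Polynomial.mk_prod_one_sub_X_pow_prime_pow_ne_zero {R : Type*} [CommRing R] [IsDomain R]
    {p : ℕ} [Fact p.Prime] (hp₀ : (p : R) ≠ 0) (hp : ¬IsUnit (p : R)) (k : ℕ) (e : ℕ → ℕ) (j : ℕ) :
    Ideal.Quotient.mk
        (Ideal.span
          {(∑ i ∈ range p, (X : R[X]) ^ (i * p ^ k)),
            (1 - X) ^ (j + (∑ l ∈ range (k + 1), e l * p ^ l) + 1)})
      ((∏ l ∈ range (k + 1), (1 - X ^ p ^ l) ^ e l) * (1 - X) ^ j) ≠ 0 := by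
  set Φ : R[X] := ∑ i ∈ range p, X ^ (i * p ^ k)
  set N := j + ∑ l ∈ range (k + 1), e l * p ^ l
  set q := Ideal.Quotient.mk (Ideal.span {Φ, (1 - X) ^ (N + 1)})
  have hΦ : ∑ i ∈ range p, q X ^ (i * p ^ k) = 0 := by
    simpa only [Φ, map_sum, map_pow] using
      Ideal.Quotient.eq_zero_iff_mem.mpr (Ideal.subset_span (Set.mem_insert Φ _))
  have hx : IsNilpotent (1 - q X) := ⟨N + 1, by
    rw [← map_one q, ← map_sub, ← map_pow, Ideal.Quotient.eq_zero_iff_mem]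
    exact Ideal.subset_span (Set.mem_insert_of_mem _ rfl)⟩
  have hΦ1 : Φ.eval 1 = p := by simp [Φ, eval_finsetSum]
  intro hF
  have hN : q ((1 - X) ^ N) = 0 := by
    simp only [map_mul, map_prod, map_pow, map_sub, map_one] at hF ⊢
    exact (associated_one_sub_pow_prod_one_sub_pow hΦ hx e j).eq_zero_iff.mpr hF
  refine C_sub_X_pow_notMem_span (hΦ1 ▸ hp₀) (hΦ1 ▸ hp) N ?_
  rwa [C_1, ← Ideal.Quotient.eq_zero_iff_mem]

/-- the reduced non-vanishing claim in the proof of Lemma 4.1: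
with `Φ(X) = ∑_{i<p} X^(i p^k)`, for nonnegative integers `e 0, …, e k` and `j`, the image of
`(∏_{l≤k} (1 − X^(p^l))^(e l)) (1 − X)^j` in
`ℤ_(p)[X]/(Φ, (1 − X)^(j + ∑_{l≤k} e l · p^l + 1))` is nonzero. -/
theorem stmt2 (p : ℕ) [hp : Fact p.Prime] (k : ℕ) (e : ℕ → ℕ) (j : ℕ) :
    Ideal.Quotient.mk
        (Ideal.span
          {(∑ i ∈ Finset.range p, (X : (IntLocAtPrime p)[X]) ^ (i * p ^ k)),
            (1 - X) ^ (j + (∑ l ∈ Finset.range (k + 1), e l * p ^ l) + 1)})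
      ((∏ l ∈ Finset.range (k + 1), (1 - X ^ p ^ l) ^ e l) * (1 - X) ^ j) ≠ 0 :=
  mk_prod_one_sub_X_pow_prime_pow_ne_zero (IntLocAtPrime.natCast_ne_zero p)
    (IntLocAtPrime.not_isUnit_natCast p) k e j
end

section
/- Let p be a prime and k ≥ 0 an integer, and write Φ(X) = ∑_{i=0}^{p−1} X^{i·p^k} ∈ ℤ[X]. Then for every integer l with 0 ≤ l ≤ k there exists a polynomial a ∈ ℤ[X] such that (1 − X^{p^l})^{(p−1)·p^{k−l}} = −p·(1 + (1 − X)·a(X)) + Φ(X) in ℤ[X]. -/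
/-!
Modulo `p`, Frobenius gives `(1 - X^(p^l))^(p^(k-l)) = 1 - X^(p^k)`, and
`(1 - Y)^(p-1) = ∑_{i<p} Y^i` because both sides become `1 - Y^p` after multiplication
by `1 - Y`. Hence `(1 - X^(p^l))^((p-1) p^(k-l)) - Φ + p` is divisible by `p` in `ℤ[X]`; it also
vanishes at `X = 1` since `Φ(1) = p`, so it is divisible by `p (X - 1)`.
-/

open Polynomial Finset

section CharP

variable {R : Type*} [CommRing R] (p : ℕ) [Fact p.Prime] [CharP R p]

theorem ZMod.one_sub_X_pow_pred :
    ((1 : (ZMod p)[X]) - X) ^ (p - 1) = ∑ i ∈ range p, X ^ i := by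
  have hp := (Fact.out : p.Prime)
  have hne : (1 : (ZMod p)[X]) - X ≠ 0 := by
    rw [← neg_sub, neg_ne_zero, ← C_1]
    exact X_sub_C_ne_zero 1
  refine mul_left_cancel₀ hne ?_
  rw [← pow_succ', Nat.sub_add_cancel hp.one_le, mul_neg_geom_sum, sub_pow_char, one_pow]

theorem one_sub_pow_pred_eq_geom_sum (y : R) :
    (1 - y) ^ (p - 1) = ∑ i ∈ range p, y ^ i := by
  have h := congrArg (eval₂ (ZMod.castHom dvd_rfl R) y) (ZMod.one_sub_X_pow_pred p)
  simpa only [eval₂_pow, eval₂_sub, eval₂_one, eval₂_X, eval₂_finsetSum] using h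

theorem one_sub_pow_prime_pow_pow_eq_sum (x : R) {k l : ℕ} (hl : l ≤ k) :
    (1 - x ^ p ^ l) ^ ((p - 1) * p ^ (k - l)) = ∑ i ∈ range p, x ^ (i * p ^ k) := by
  calc (1 - x ^ p ^ l) ^ ((p - 1) * p ^ (k - l))
      = ((1 - x ^ p ^ l) ^ p ^ (k - l)) ^ (p - 1) := by rw [mul_comm, pow_mul]
    _ = (1 - x ^ p ^ k) ^ (p - 1) := by
      rw [sub_pow_char_pow, one_pow, ← pow_mul, ← pow_add, Nat.add_sub_cancel' hl]
    _ = ∑ i ∈ range p, (x ^ p ^ k) ^ i := one_sub_pow_pred_eq_geom_sum p _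
    _ = ∑ i ∈ range p, x ^ (i * p ^ k) := by simp_rw [← pow_mul, mul_comm]

end CharP

theorem Polynomial.C_dvd_iff_map_intCast_eq_zero (n : ℕ) (f : ℤ[X]) :
    C (n : ℤ) ∣ f ↔ f.map (Int.castRingHom (ZMod n)) = 0 := by
  rw [C_dvd_iff_dvd_coeff]
  simp [Polynomial.ext_iff, ZMod.intCast_zmod_eq_zero_iff_dvd]

theorem Polynomial.C_mul_X_sub_C_dvd {R : Type*} [CommRing R] [NoZeroDivisors R] {r a : R}
    {f : R[X]} (hr : r ≠ 0) (hrf : C r ∣ f) (hf : f.IsRoot a) : C r * (X - C a) ∣ f := by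
  obtain ⟨g, rfl⟩ := hrf
  have hg : g.IsRoot a := by simpa [hr] using hf
  exact mul_dvd_mul_left _ (dvd_iff_isRoot.mpr hg)

/-- identity (a) in the proof of Lemma 4.1: with
`Φ(X) = ∑_{i<p} X^(i p^k)`, for every `0 ≤ l ≤ k` there is `a ∈ ℤ[X]` with
`(1 − X^(p^l))^((p−1) p^(k−l)) = −p (1 + (1 − X) a(X)) + Φ(X)` in `ℤ[X]`. -/
theorem stmt3 (p : ℕ) (hp : p.Prime) (k : ℕ) :
    ∀ l : ℕ, l ≤ k →
      ∃ a : ℤ[X],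
        (1 - (X : ℤ[X]) ^ p ^ l) ^ ((p - 1) * p ^ (k - l)) =
          -(p : ℤ[X]) * (1 + (1 - X) * a) + ∑ i ∈ Finset.range p, X ^ (i * p ^ k) := by
  intro l hl
  have : Fact p.Prime := ⟨hp⟩
  set f : ℤ[X] := (1 - (X : ℤ[X]) ^ p ^ l) ^ ((p - 1) * p ^ (k - l)) -
    ∑ i ∈ range p, X ^ (i * p ^ k) + C (p : ℤ)
  have hdvd : C (p : ℤ) ∣ f := by
    rw [C_dvd_iff_map_intCast_eq_zero]
    simp [f, Polynomial.map_sum, one_sub_pow_prime_pow_pow_eq_sum p _ hl]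
  have hroot : f.IsRoot 1 := by
    have hexp : (p - 1) * p ^ (k - l) ≠ 0 :=
      mul_ne_zero (Nat.sub_ne_zero_of_lt hp.one_lt) (pow_ne_zero _ hp.ne_zero)
    simp [f, eval_finsetSum, zero_pow hexp]
  obtain ⟨a, ha⟩ := C_mul_X_sub_C_dvd (Int.natCast_ne_zero.mpr hp.ne_zero) hdvd hroot
  refine ⟨a, ?_⟩
  simp only [f, map_natCast, map_one] at ha
  linear_combination ha
end

section
/- Let p be a prime and k ≥ 0 an integer, and write Φ(X) = ∑_{i=0}^{p−1} X^{i·p^k} ∈ ℤ[X]. Then for every integer l with 0 ≤ l ≤ k and every integer n ≥ 1, in the quotient ring ℤ_(p)[X]/(Φ(X), (1 − X)^n) the image of p lies in the principal ideal generated by the image of 1 − X^{p^l}. -/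
open Polynomial Finset

/-!
Modulo `p`, Frobenius turns `(X ^ p ^ l - 1) ^ ((p - 1) * p ^ (k - l))` into
`(X - 1) ^ (p ^ (k + 1) - p ^ k)`, which is the cyclotomic polynomial `Φ = Φ_{p ^ (k + 1)}`.
Over `ℤ` the difference is therefore `p * c`, and evaluating at `1` (where `Φ(1) = p`) gives
`c(1) = -1`, i.e. `c = -(1 + (1 - X) * a)`. In the quotient `Φ` vanishes and `1 - X` is
nilpotent, so `(X ^ p ^ l - 1) ^ ((p - 1) * p ^ (k - l))` is `p` times a unit.
-/

lemma Polynomial.X_pow_sub_one_pow_eq_cyclotomic_of_charP (R : Type*) [CommRing R] (p : ℕ) [Fact p.Prime]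
    [CharP R p] {k l : ℕ} (hl : l ≤ k) :
    ((X : R[X]) ^ p ^ l - 1) ^ ((p - 1) * p ^ (k - l)) = cyclotomic (p ^ (k + 1)) R := by
  have hcyc := cyclotomic_mul_prime_pow_eq R (m := 1) (p := p) (k := k + 1)
    (Nat.Prime.not_dvd_one Fact.out) k.succ_pos
  rw [mul_one, cyclotomic_one, Nat.add_sub_cancel] at hcyc
  have hfrob : (X : R[X]) ^ p ^ l - 1 = (X - 1) ^ p ^ l := by rw [sub_pow_char_pow, one_pow]
  have hexp : p ^ l * ((p - 1) * p ^ (k - l)) = p ^ (k + 1) - p ^ k := by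
    rw [mul_left_comm, ← pow_add, Nat.add_sub_cancel' hl, pow_succ, ← Nat.mul_sub_one, mul_comm]
  rw [hcyc, hfrob, ← pow_mul, hexp]

lemma Polynomial.natCast_dvd_of_map_zmod_eq_zero {p : ℕ} {f : ℤ[X]}
    (hf : f.map (Int.castRingHom (ZMod p)) = 0) : (p : ℤ[X]) ∣ f := by
  rw [← C_eq_natCast, C_dvd_iff_dvd_coeff]
  intro i
  rw [← ZMod.intCast_zmod_eq_zero_iff_dvd, ← eq_intCast (Int.castRingHom _), ← coeff_map, hf,
    coeff_zero]

lemma Polynomial.exists_X_pow_sub_one_pow_eq_cyclotomic_sub_int (p : ℕ) [hp : Fact p.Prime] {k l : ℕ}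
    (hl : l ≤ k) : ∃ a : ℤ[X], ((X : ℤ[X]) ^ p ^ l - 1) ^ ((p - 1) * p ^ (k - l)) =
      cyclotomic (p ^ (k + 1)) ℤ - (p : ℤ[X]) * (1 + (1 - X) * a) := by
  obtain ⟨c, hc⟩ : (p : ℤ[X]) ∣ ((X : ℤ[X]) ^ p ^ l - 1) ^ ((p - 1) * p ^ (k - l)) -
      cyclotomic (p ^ (k + 1)) ℤ := by
    apply natCast_dvd_of_map_zmod_eq_zero
    simp only [Polynomial.map_sub, Polynomial.map_pow, Polynomial.map_one, Polynomial.map_X,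
      map_cyclotomic, X_pow_sub_one_pow_eq_cyclotomic_of_charP _ p hl, sub_self]
  have hroot : (c + 1).IsRoot 1 := by
    have hN : (p - 1) * p ^ (k - l) ≠ 0 :=
      Nat.mul_ne_zero (Nat.sub_ne_zero_of_lt hp.out.one_lt) (pow_ne_zero _ hp.out.ne_zero)
    have h1 := congrArg (eval 1) hc
    rw [eval_sub, eval_one_cyclotomic_prime_pow, eval_pow, eval_sub, eval_pow, eval_X, one_pow,
      eval_one, sub_self, zero_pow hN, eval_mul, eval_natCast] at h1
    have hp0 : (p : ℤ) ≠ 0 := by exact_mod_cast hp.out.ne_zero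
    have hc_one : eval 1 c = -1 := mul_left_cancel₀ hp0 (by linear_combination -h1)
    rw [IsRoot, eval_add, hc_one, eval_one, neg_add_cancel]
  obtain ⟨a, ha⟩ := dvd_iff_isRoot.mpr hroot
  refine ⟨a, ?_⟩
  rw [map_one] at ha
  linear_combination hc + (p : ℤ[X]) * ha

lemma Polynomial.exists_X_pow_sub_one_pow_eq_cyclotomic_sub (R : Type*) [CommRing R] (p : ℕ) [Fact p.Prime]
    {k l : ℕ} (hl : l ≤ k) : ∃ a : R[X], ((X : R[X]) ^ p ^ l - 1) ^ ((p - 1) * p ^ (k - l)) =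
      cyclotomic (p ^ (k + 1)) R - (p : R[X]) * (1 + (1 - X) * a) := by
  obtain ⟨a, ha⟩ := exists_X_pow_sub_one_pow_eq_cyclotomic_sub_int p hl
  refine ⟨a.map (Int.castRingHom R), ?_⟩
  simpa only [Polynomial.map_pow, Polynomial.map_sub, Polynomial.map_add, Polynomial.map_mul,
    Polynomial.map_X, Polynomial.map_one, Polynomial.map_natCast, map_cyclotomic]
    using congrArg (map (Int.castRingHom R)) ha

lemma Ideal.mem_span_singleton_of_pow_eq_mul_isUnit {S : Type*} [CommSemiring S] {a b u : S}
    {N : ℕ} (hN : N ≠ 0) (hu : IsUnit u) (h : a ^ N = b * u) : b ∈ Ideal.span {a} := by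
  rw [Ideal.mem_span_singleton, ← hu.dvd_mul_right, ← h]
  exact dvd_pow_self a hN

theorem Polynomial.mk_natCast_mem_span_mk_one_sub_X_pow {R : Type*} [CommRing R] {p : ℕ}
    [hp : Fact p.Prime] {k l : ℕ} (hl : l ≤ k) {I : Ideal R[X]}
    (hΦ : cyclotomic (p ^ (k + 1)) R ∈ I) (hX : IsNilpotent (Ideal.Quotient.mk I (1 - X))) :
    Ideal.Quotient.mk I p ∈ Ideal.span {Ideal.Quotient.mk I (1 - X ^ p ^ l)} := by
  obtain ⟨a, ha⟩ := exists_X_pow_sub_one_pow_eq_cyclotomic_sub R p hl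
  have hunit : IsUnit (-Ideal.Quotient.mk I (1 + (1 - X) * a)) := by
    rw [map_add, map_one, map_mul]
    exact ((Commute.all _ _).isNilpotent_mul_right hX).isUnit_one_add.neg
  rw [← Ideal.span_singleton_neg (Ideal.Quotient.mk I _), ← map_neg, neg_sub]
  refine Ideal.mem_span_singleton_of_pow_eq_mul_isUnit
    (Nat.mul_ne_zero (Nat.sub_ne_zero_of_lt hp.out.one_lt) (pow_ne_zero (k - l) hp.out.ne_zero))
    hunit ?_
  rw [← map_pow, ha, map_sub, Ideal.Quotient.eq_zero_iff_mem.mpr hΦ, map_mul]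
  ring

theorem stmt4_general (p : ℕ) [hp : Fact p.Prime] (k : ℕ) (l : ℕ) (hl : l ≤ k) (n : ℕ) :
    Ideal.Quotient.mk
        (Ideal.span
          {(∑ i ∈ Finset.range p, (X : (IntLocAtPrime p)[X]) ^ (i * p ^ k)), (1 - X) ^ n})
      (p : (IntLocAtPrime p)[X]) ∈
    Ideal.span
      {Ideal.Quotient.mk
        (Ideal.span
          {(∑ i ∈ Finset.range p, (X : (IntLocAtPrime p)[X]) ^ (i * p ^ k)), (1 - X) ^ n})
        (1 - X ^ p ^ l)} := by
  refine mk_natCast_mem_span_mk_one_sub_X_pow hl ?_ ⟨n, ?_⟩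
  · rw [cyclotomic_prime_pow_eq_geom_sum hp.out]
    simp_rw [← pow_mul, mul_comm (p ^ k)]
    exact Ideal.subset_span (Set.mem_insert _ _)
  · rw [← map_pow, Ideal.Quotient.eq_zero_iff_mem]
    exact Ideal.subset_span (Set.mem_insert_of_mem _ rfl)

/-- from the proof of Lemma 4.1: with `Φ(X) = ∑_{i<p} X^(i p^k)`, for every
`0 ≤ l ≤ k` and every `n ≥ 1`, in `ℤ_(p)[X]/(Φ, (1 − X)^n)` the image of `p` lies in the
principal ideal generated by the image of `1 − X^(p^l)`. -/
theorem stmt4 (p : ℕ) [hp : Fact p.Prime] (k : ℕ) (l : ℕ) (hl : l ≤ k) (n : ℕ) (hn : 1 ≤ n) :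
    Ideal.Quotient.mk
        (Ideal.span
          {(∑ i ∈ Finset.range p, (X : (IntLocAtPrime p)[X]) ^ (i * p ^ k)), (1 - X) ^ n})
      (p : (IntLocAtPrime p)[X]) ∈
    Ideal.span
      {Ideal.Quotient.mk
        (Ideal.span
          {(∑ i ∈ Finset.range p, (X : (IntLocAtPrime p)[X]) ^ (i * p ^ k)), (1 - X) ^ n})
        (1 - X ^ p ^ l)} :=
  stmt4_general p (hp := hp) k l hl n
end

section
/- Let p be a prime and k ≥ 0 an integer, and write Φ(X) = ∑_{i=0}^{p−1} X^{i·p^k} ∈ ℤ[X]. Then for every integer l with 0 ≤ l ≤ k and every integer n ≥ 1, in the quotient ring ℤ_(p)[X]/(Φ(X), (1 − X)^n) the image of (1 − X)^{p^l} lies in the principal ideal generated by the image of 1 − X^{p^l}. -/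
open Polynomial Finset

/-!
Let `x` be the image of `X`, so `Φ(x) = ∑_{i<p} x^(i p^k) = 0`. Modulo `1 - x^(p^l)` we have
`x^(p^k) ≡ 1`, hence `0 = Φ(x) ≡ p`, so `1 - x^(p^l)` divides `p`. On the other hand
`(1 - x)^(p^l) ≡ 1 - x^(p^l)` modulo `p`, so `1 - x^(p^l)` divides `(1 - x)^(p^l)`.
-/

variable {S : Type*} [CommRing S]

theorem natCast_dvd_sub_pow_prime_pow_sub {p : ℕ} (hp : p.Prime) (x y : S) (n : ℕ) :
    (p : S) ∣ (x - y) ^ p ^ n - (x ^ p ^ n - y ^ p ^ n) := by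
  obtain ⟨r, hr⟩ := exists_add_pow_prime_pow_eq hp x (-y) n
  -- Expanding `0 = (y - y)^(p^n)` shows that `p` divides `y^(p^n) + (-y)^(p^n)`.
  obtain ⟨s, hs⟩ := exists_add_pow_prime_pow_eq hp y (-y) n
  rw [add_neg_cancel, zero_pow (pow_ne_zero n hp.ne_zero)] at hs
  exact ⟨x * -y * r - y * -y * s, by linear_combination hr - hs⟩

theorem one_sub_dvd_natCast_of_geom_sum_eq_zero {z : S} {m : ℕ}
    (h : ∑ i ∈ range m, z ^ i = 0) : 1 - z ∣ (m : S) := by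
  have hm : (m : S) = ∑ i ∈ range m, (1 - z ^ i) := by simp [sum_sub_distrib, h]
  rw [hm]
  exact dvd_sum fun i _ => one_sub_dvd_one_sub_pow z i

theorem one_sub_pow_prime_pow_dvd_pow_of_sum_eq_zero {p k l : ℕ} (hp : p.Prime) (hl : l ≤ k)
    {x : S} (hx : ∑ i ∈ range p, x ^ (i * p ^ k) = 0) : 1 - x ^ p ^ l ∣ (1 - x) ^ p ^ l := by
  have hpk : (x ^ p ^ l) ^ p ^ (k - l) = x ^ p ^ k := by
    rw [← pow_mul, ← pow_add, Nat.add_sub_cancel' hl]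
  have hdvd_p : 1 - x ^ p ^ l ∣ (p : S) := by
    refine (hpk ▸ one_sub_dvd_one_sub_pow (x ^ p ^ l) (p ^ (k - l))).trans ?_
    exact one_sub_dvd_natCast_of_geom_sum_eq_zero (by simpa only [← pow_mul, mul_comm] using hx)
  have hcong := natCast_dvd_sub_pow_prime_pow_sub hp (1 : S) x l
  rw [one_pow] at hcong
  simpa using dvd_add (hdvd_p.trans hcong) (dvd_refl (1 - x ^ p ^ l))

theorem mk_one_sub_X_pow_prime_pow_mem_span_of_sum_mem {R : Type*} [CommRing R] {p k l : ℕ}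
    (hp : p.Prime) (hl : l ≤ k) {I : Ideal R[X]}
    (hΦ : ∑ i ∈ range p, (X : R[X]) ^ (i * p ^ k) ∈ I) :
    Ideal.Quotient.mk I ((1 - X) ^ p ^ l) ∈ Ideal.span {Ideal.Quotient.mk I (1 - X ^ p ^ l)} := by
  have hx : ∑ i ∈ range p, Ideal.Quotient.mk I X ^ (i * p ^ k) = 0 := by
    simpa only [map_sum, map_pow] using Ideal.Quotient.eq_zero_iff_mem.mpr hΦ
  rw [Ideal.mem_span_singleton, map_pow, map_sub, map_sub, map_one, map_pow]
  exact one_sub_pow_prime_pow_dvd_pow_of_sum_eq_zero hp hl hx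

theorem stmt5_general (p : ℕ) [hp : Fact p.Prime] (k : ℕ) (l : ℕ) (hl : l ≤ k) (n : ℕ) :
    Ideal.Quotient.mk
        (Ideal.span
          {(∑ i ∈ Finset.range p, (X : (IntLocAtPrime p)[X]) ^ (i * p ^ k)), (1 - X) ^ n})
      ((1 - X) ^ p ^ l) ∈
    Ideal.span
      {Ideal.Quotient.mk
        (Ideal.span
          {(∑ i ∈ Finset.range p, (X : (IntLocAtPrime p)[X]) ^ (i * p ^ k)), (1 - X) ^ n})
        (1 - X ^ p ^ l)} :=
  mk_one_sub_X_pow_prime_pow_mem_span_of_sum_mem hp.out hl (Ideal.subset_span (Set.mem_insert _ _))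

/-- from the proof of Lemma 4.1: with `Φ(X) = ∑_{i<p} X^(i p^k)`, for every
`0 ≤ l ≤ k` and every `n ≥ 1`, in `ℤ_(p)[X]/(Φ, (1 − X)^n)` the image of `(1 − X)^(p^l)` lies in
the principal ideal generated by the image of `1 − X^(p^l)`. -/
theorem stmt5 (p : ℕ) [hp : Fact p.Prime] (k : ℕ) (l : ℕ) (hl : l ≤ k) (n : ℕ) (hn : 1 ≤ n) :
    Ideal.Quotient.mk
        (Ideal.span
          {(∑ i ∈ Finset.range p, (X : (IntLocAtPrime p)[X]) ^ (i * p ^ k)), (1 - X) ^ n})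
      ((1 - X) ^ p ^ l) ∈
    Ideal.span
      {Ideal.Quotient.mk
        (Ideal.span
          {(∑ i ∈ Finset.range p, (X : (IntLocAtPrime p)[X]) ^ (i * p ^ k)), (1 - X) ^ n})
        (1 - X ^ p ^ l)} :=
  stmt5_general p (hp := hp) k l hl n
end

section
/- Let p be a prime and k ≥ 0 an integer, and write Φ(X) = ∑_{i=0}^{p−1} X^{i·p^k} ∈ ℤ[X]. Let e_0, …, e_k and j be nonnegative integers and let n ≥ 1. Then in the quotient ring ℤ_(p)[X]/(Φ(X), (1 − X)^n), the image of the polynomial (∏_{l=0}^k (1 − X^{p^l})^{e_l})·(1 − X)^j lies in the principal ideal generated by the image of (1 − X)^{j + ∑_{l=0}^k e_l·p^l}. -/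
/-!
Write `x` for the image of `X` and `π = 1 - x`, which is nilpotent in the quotient. Since
`Φ(x) = ∑_{i<p} (x^{p^k})^i` vanishes and `∑_{i<p} y^i ≡ p` modulo `1 - y`, the element
`1 - x^{p^k}` divides `p`. On the other hand, `1 = (x + π)^{p^m}` gives
`π^{p^m} = 1 - x^{p^m} + p π r`. Writing `p = (1 - x^{p^k}) c`, the case `m = k` reads
`π^{p^k} = (1 - x^{p^k}) (1 + π c r)` with a unit second factor, so `π^{p^k} ∣ p`; the case
`m = l ≤ k` then gives `π^{p^l} ∣ 1 - x^{p^l}`, and multiplying these divisibilities gives the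
claim.
-/

open Polynomial Finset

variable {A : Type*} [CommRing A]

lemma one_sub_dvd_natCast_of_geom_sum_eq_zero_s7 {y : A} {n : ℕ}
    (h : ∑ i ∈ range n, y ^ i = 0) : 1 - y ∣ (n : A) := by
  have hn : (n : A) = ∑ i ∈ range n, (1 - y ^ i) := by
    rw [sum_sub_distrib, h, sub_zero, sum_const, card_range, nsmul_eq_mul, mul_one]
  rw [hn]
  exact dvd_sum fun i _ ↦ by simpa using sub_dvd_pow_sub_pow 1 y i

lemma exists_one_sub_pow_prime_pow_eq {p : ℕ} (hp : p.Prime) (x : A) (m : ℕ) :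
    ∃ r, (1 - x) ^ p ^ m = 1 - x ^ p ^ m + p * (1 - x) * r := by
  obtain ⟨r, hr⟩ := exists_add_pow_prime_pow_eq hp x (1 - x) m
  refine ⟨-(x * r), ?_⟩
  rw [add_sub_cancel, one_pow] at hr
  linear_combination -hr

lemma one_sub_pow_prime_pow_dvd_natCast {p : ℕ} (hp : p.Prime) {x : A} (k : ℕ)
    (hx : IsNilpotent (1 - x)) (hdvd : 1 - x ^ p ^ k ∣ (p : A)) :
    (1 - x) ^ p ^ k ∣ (p : A) := by
  obtain ⟨c, hc⟩ := hdvd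
  obtain ⟨r, hr⟩ := exists_one_sub_pow_prime_pow_eq hp x k
  have hunit : IsUnit (1 + (1 - x) * (c * r)) :=
    ((Commute.all _ _).isNilpotent_mul_right hx).isUnit_one_add
  have hassoc : (1 - x) ^ p ^ k = (1 - x ^ p ^ k) * (1 + (1 - x) * (c * r)) := by
    rw [hr, hc]; ring
  calc (1 - x) ^ p ^ k ∣ 1 - x ^ p ^ k := (hunit.dvd_mul_right).mp hassoc.dvd
    _ ∣ (p : A) := ⟨c, hc⟩

lemma one_sub_pow_prime_pow_dvd_one_sub_pow {p : ℕ} (hp : p.Prime) {x : A} {k l : ℕ}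
    (hl : l ≤ k) (hdvd : (1 - x) ^ p ^ k ∣ (p : A)) :
    (1 - x) ^ p ^ l ∣ 1 - x ^ p ^ l := by
  obtain ⟨r, hr⟩ := exists_one_sub_pow_prime_pow_eq hp x l
  have hp_dvd : (1 - x) ^ p ^ l ∣ (p : A) :=
    (pow_dvd_pow _ (Nat.pow_le_pow_right hp.pos hl)).trans hdvd
  have hsplit : 1 - x ^ p ^ l = (1 - x) ^ p ^ l - p * (1 - x) * r := by rw [hr]; ring
  rw [hsplit]
  exact dvd_sub dvd_rfl ((hp_dvd.mul_right _).mul_right _)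

lemma one_sub_pow_sum_dvd_prod {p : ℕ} (hp : p.Prime) {x : A} (k : ℕ) (e : ℕ → ℕ)
    (hdvd : (1 - x) ^ p ^ k ∣ (p : A)) :
    (1 - x) ^ ∑ l ∈ range (k + 1), e l * p ^ l ∣
      ∏ l ∈ range (k + 1), (1 - x ^ p ^ l) ^ e l := by
  rw [← prod_pow_eq_pow_sum]
  refine prod_dvd_prod_of_dvd _ _ fun l hl ↦ ?_
  rw [mul_comm (e l), pow_mul]
  exact pow_dvd_pow_of_dvd (one_sub_pow_prime_pow_dvd_one_sub_pow hp
    (Nat.lt_succ_iff.mp (mem_range.mp hl)) hdvd) _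

theorem one_sub_pow_dvd_prod_one_sub_pow_mul {p : ℕ} (hp : p.Prime) {x : A} (k : ℕ)
    (e : ℕ → ℕ) (j : ℕ) (hΦ : ∑ i ∈ range p, (x ^ p ^ k) ^ i = 0)
    (hx : IsNilpotent (1 - x)) :
    (1 - x) ^ (j + ∑ l ∈ range (k + 1), e l * p ^ l) ∣
      (∏ l ∈ range (k + 1), (1 - x ^ p ^ l) ^ e l) * (1 - x) ^ j := by
  have hdvd := one_sub_pow_prime_pow_dvd_natCast hp k hx
    (one_sub_dvd_natCast_of_geom_sum_eq_zero_s7 hΦ)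
  rw [pow_add, mul_comm]
  exact mul_dvd_mul (one_sub_pow_sum_dvd_prod hp k e hdvd) dvd_rfl

theorem Polynomial.mk_prod_one_sub_X_pow_mul_mem_span {R : Type*} [CommRing R] {p : ℕ}
    (hp : p.Prime) (k : ℕ) (e : ℕ → ℕ) (j n : ℕ) :
    Ideal.Quotient.mk (Ideal.span {∑ i ∈ range p, (X : R[X]) ^ (i * p ^ k), (1 - X) ^ n})
        ((∏ l ∈ range (k + 1), (1 - X ^ p ^ l) ^ e l) * (1 - X) ^ j) ∈
      Ideal.span {Ideal.Quotient.mk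
        (Ideal.span {∑ i ∈ range p, (X : R[X]) ^ (i * p ^ k), (1 - X) ^ n})
        ((1 - X) ^ (j + ∑ l ∈ range (k + 1), e l * p ^ l))} := by
  set I := Ideal.span {∑ i ∈ range p, (X : R[X]) ^ (i * p ^ k), (1 - X) ^ n}
  have hΦ : ∑ i ∈ range p, (Ideal.Quotient.mk I X ^ p ^ k) ^ i = 0 := by
    have hmem : Ideal.Quotient.mk I (∑ i ∈ range p, X ^ (i * p ^ k)) = 0 :=
      Ideal.Quotient.eq_zero_iff_mem.mpr (Ideal.subset_span (by simp))
    simpa only [map_sum, map_pow, ← pow_mul, mul_comm] using hmem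
  have hx : IsNilpotent (1 - Ideal.Quotient.mk I X) := by
    refine ⟨n, ?_⟩
    rw [← map_one (Ideal.Quotient.mk I), ← map_sub, ← map_pow, Ideal.Quotient.eq_zero_iff_mem]
    exact Ideal.subset_span (by simp)
  simp only [Ideal.mem_span_singleton, map_mul, map_prod, map_pow, map_sub, map_one]
  exact one_sub_pow_dvd_prod_one_sub_pow_mul hp k e j hΦ hx

theorem stmt7_general (p : ℕ) [hp : Fact p.Prime] (k : ℕ) (e : ℕ → ℕ) (j n : ℕ) :
    Ideal.Quotient.mk
        (Ideal.span
          {(∑ i ∈ Finset.range p, (X : (IntLocAtPrime p)[X]) ^ (i * p ^ k)), (1 - X) ^ n})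
      ((∏ l ∈ Finset.range (k + 1), (1 - X ^ p ^ l) ^ e l) * (1 - X) ^ j) ∈
    Ideal.span
      {Ideal.Quotient.mk
        (Ideal.span
          {(∑ i ∈ Finset.range p, (X : (IntLocAtPrime p)[X]) ^ (i * p ^ k)), (1 - X) ^ n})
        ((1 - X) ^ (j + ∑ l ∈ Finset.range (k + 1), e l * p ^ l))} :=
  mk_prod_one_sub_X_pow_mul_mem_span hp.out k e j n

/-- membership claim of Remark 4.2: with `Φ(X) = ∑_{i<p} X^(i p^k)`, for
nonnegative integers `e 0, …, e k`, `j` and `n ≥ 1`, in `ℤ_(p)[X]/(Φ, (1 − X)^n)` the image of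
`(∏_{l≤k} (1 − X^(p^l))^(e l)) (1 − X)^j` lies in the principal ideal generated by the image of
`(1 − X)^(j + ∑_{l≤k} e l · p^l)`. -/
theorem stmt7 (p : ℕ) [hp : Fact p.Prime] (k : ℕ) (e : ℕ → ℕ) (j n : ℕ) (hn : 1 ≤ n) :
    Ideal.Quotient.mk
        (Ideal.span
          {(∑ i ∈ Finset.range p, (X : (IntLocAtPrime p)[X]) ^ (i * p ^ k)), (1 - X) ^ n})
      ((∏ l ∈ Finset.range (k + 1), (1 - X ^ p ^ l) ^ e l) * (1 - X) ^ j) ∈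
    Ideal.span
      {Ideal.Quotient.mk
        (Ideal.span
          {(∑ i ∈ Finset.range p, (X : (IntLocAtPrime p)[X]) ^ (i * p ^ k)), (1 - X) ^ n})
        ((1 - X) ^ (j + ∑ l ∈ Finset.range (k + 1), e l * p ^ l))} :=
  stmt7_general p (hp := hp) k e j n
end

section
/- Let p be a prime and k ≥ 0 an integer. Let t_1, …, t_m be positive integers whose p-adic valuations satisfy ν_p(t_i) ≤ k for every i, with ν_p(t_i) = k for at least one i. Set m_l = #{i : ν_p(t_i) = l} for 0 ≤ l ≤ k and δ = ∑_{l=0}^k p^l·m_l − (p^k − 1). Then for all integers j ≥ 0 and n with 1 ≤ n ≤ j + δ, the image of the polynomial (∏_{i=1}^m (1 − X^{t_i}))·(1 − X)^j in the quotient ring ℤ_(p)[X]/(1 − X^{p^{k+1}}, (1 − X)^n) is zero. -/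
/-!
Write `y = 1 - x`, `w = 1 - x ^ p ^ k` and `Φ = ∑_{r<p} x ^ (p ^ k * r)`, so that
`1 - x ^ p ^ (k + 1) = w Φ`. Modulo `Φ` we have `w ∣ p` (as `Φ ≡ p mod w`), and
`1 - x ^ p ^ v = y ^ p ^ v + p x y r` by the binomial theorem. For `v ≤ k` also
`1 - x ^ p ^ v ∣ w`, so `z = (1 - x ^ p ^ v) y ^ a` satisfies `z ≡ y ^ (a + p ^ v)` modulo `y z`,
whence `y ^ (a + p ^ v) ∣ z`. Thus each factor `1 - x ^ t i` raises the power of `y` dividing the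
product by `p ^ ν_p(t i)` modulo `Φ`. Multiplying by `w`, which divides `1 - x ^ t i₀` for the
index with `ν_p(t i₀) = k` and is itself a multiple of `y`, turns congruences modulo `Φ` into
congruences modulo `1 - x ^ p ^ (k + 1)` and gains one more power of `y`: in total
`j + 1 + ∑_{i ≠ i₀} p ^ ν_p(t i) = j + δ ≥ n`.
-/

open Polynomial Finset

lemma sum_mul_card_filter_eq_sum {ι κ R : Type*} [DecidableEq κ] [CommSemiring R]
    {s : Finset ι} {u : Finset κ} {g : ι → κ} (h : ∀ i ∈ s, g i ∈ u) (f : κ → R) :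
    ∑ l ∈ u, f l * ((s.filter fun i => g i = l).card : R) = ∑ i ∈ s, f (g i) := by
  rw [← sum_fiberwise_of_maps_to h]
  refine sum_congr rfl fun l _ => ?_
  rw [sum_congr rfl fun i hi => by rw [(mem_filter.mp hi).2], sum_const, nsmul_eq_mul, mul_comm]

section

variable {A : Type*} [CommRing A]

lemma one_sub_pow_dvd_one_sub_pow (x : A) {a b : ℕ} (h : a ∣ b) : 1 - x ^ a ∣ 1 - x ^ b := by
  rw [← neg_dvd, ← dvd_neg, neg_sub, neg_sub]
  exact dvd_pow_sub_one_of_dvd h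

lemma one_sub_dvd_natCast_sub_geom_sum (u : A) (n : ℕ) :
    1 - u ∣ (n : A) - ∑ i ∈ range n, u ^ i := by
  have : (n : A) - ∑ i ∈ range n, u ^ i = ∑ i ∈ range n, (1 - u ^ i) := by
    simp [sum_sub_distrib]
  rw [this]
  exact dvd_sum fun i _ => one_sub_dvd_one_sub_pow u i

-- `1 - y * b` is invertible modulo `y ^ N`.
lemma pow_dvd_of_eq_pow_mul_add_mul {y b c z : A} (N : ℕ) (h : z = y ^ N * c + y * b * z) :
    y ^ N ∣ z :=
  ⟨c * ∑ i ∈ range N, (y * b) ^ i + b ^ N * z, by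
    linear_combination (∑ i ∈ range N, (y * b) ^ i) * h - z * mul_neg_geom_sum (y * b) N⟩

lemma mul_dvd_mul_of_mk_dvd {d e a b : A} (hde : d * e = 0)
    (h : Ideal.Quotient.mk (Ideal.span {e}) a ∣ Ideal.Quotient.mk (Ideal.span {e}) b) :
    d * a ∣ d * b := by
  obtain ⟨c, hc⟩ := h
  obtain ⟨c, rfl⟩ := Ideal.Quotient.mk_surjective c
  rw [← map_mul, Ideal.Quotient.eq, Ideal.mem_span_singleton] at hc
  obtain ⟨u, hu⟩ := hc
  exact ⟨c, by linear_combination d * hu + u * hde⟩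

variable {p k : ℕ} {x : A}

theorem one_sub_pow_add_dvd_one_sub_pow_mul (hp : p.Prime)
    (hΦ : ∑ r ∈ range p, (x ^ p ^ k) ^ r = 0) {v : ℕ} (hv : v ≤ k) (a : ℕ) :
    (1 - x) ^ (a + p ^ v) ∣ (1 - x ^ p ^ v) * (1 - x) ^ a := by
  obtain ⟨r, hr⟩ := exists_add_pow_prime_pow_eq hp x (1 - x) v
  rw [add_sub_cancel, one_pow] at hr
  obtain ⟨e, he⟩ : 1 - x ^ p ^ k ∣ (p : A) := by
    simpa [hΦ] using one_sub_dvd_natCast_sub_geom_sum (x ^ p ^ k) p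
  obtain ⟨M, hM⟩ := one_sub_pow_dvd_one_sub_pow x (pow_dvd_pow p hv)
  refine pow_dvd_of_eq_pow_mul_add_mul (b := M * e * x * r) (c := 1) _ ?_
  linear_combination (1 - x) ^ a * hr + (x * r * (1 - x) ^ (a + 1)) * he
    + (e * x * r * (1 - x) ^ (a + 1)) * hM

theorem one_sub_pow_sum_dvd_prod_mul {ι : Type*} (hp : p.Prime)
    (hΦ : ∑ r ∈ range p, (x ^ p ^ k) ^ r = 0) (s : Finset ι) {t : ι → ℕ}
    (hle : ∀ i ∈ s, padicValNat p (t i) ≤ k) (c : ℕ) :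
    (1 - x) ^ (c + ∑ i ∈ s, p ^ padicValNat p (t i)) ∣
      (∏ i ∈ s, (1 - x ^ t i)) * (1 - x) ^ c := by
  classical
  induction s using Finset.induction_on with
  | empty => simp
  | insert i s hi ih =>
    set S := ∑ i ∈ s, p ^ padicValNat p (t i)
    rw [prod_insert hi, sum_insert hi, add_left_comm, add_comm, mul_assoc]
    calc (1 - x) ^ (c + S + p ^ padicValNat p (t i))
        ∣ (1 - x ^ p ^ padicValNat p (t i)) * (1 - x) ^ (c + S) :=
          one_sub_pow_add_dvd_one_sub_pow_mul hp hΦ (hle i (mem_insert_self i s)) _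
      _ ∣ (1 - x ^ t i) * ((∏ i ∈ s, (1 - x ^ t i)) * (1 - x) ^ c) :=
          mul_dvd_mul (one_sub_pow_dvd_one_sub_pow x pow_padicValNat_dvd)
            (ih fun i hi => hle i (mem_insert_of_mem hi))

theorem prod_one_sub_pow_mul_eq_zero {ι : Type*} (hp : p.Prime) (hx : x ^ p ^ (k + 1) = 1)
    {s : Finset ι} {t : ι → ℕ} (hle : ∀ i ∈ s, padicValNat p (t i) ≤ k)
    {i₀ : ι} (hi₀ : i₀ ∈ s) (hk : padicValNat p (t i₀) = k) {j n : ℕ} (hy : (1 - x) ^ n = 0)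
    (hn : n + p ^ k ≤ j + 1 + ∑ i ∈ s, p ^ padicValNat p (t i)) :
    (∏ i ∈ s, (1 - x ^ t i)) * (1 - x) ^ j = 0 := by
  classical
  set S := ∑ i ∈ s.erase i₀, p ^ padicValNat p (t i)
  have hnS : n ≤ j + S + 1 := by
    rw [← add_sum_erase s _ hi₀, hk] at hn
    omega
  set Φ := ∑ r ∈ range p, (x ^ p ^ k) ^ r
  have hWΦ : (1 - x ^ p ^ k) * Φ = 0 := by
    rw [mul_neg_geom_sum, ← pow_mul, ← pow_succ, hx, sub_self]
  have hΦ : ∑ r ∈ range p, (Ideal.Quotient.mk (Ideal.span {Φ}) x ^ p ^ k) ^ r = 0 := by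
    simpa [Φ] using Ideal.Quotient.eq_zero_iff_mem.2 (Ideal.mem_span_singleton_self Φ)
  have hrest : (1 - x ^ p ^ k) * (1 - x) ^ (j + S)
      ∣ (1 - x ^ p ^ k) * ((∏ i ∈ s.erase i₀, (1 - x ^ t i)) * (1 - x) ^ j) :=
    mul_dvd_mul_of_mk_dvd hWΦ (by
      simpa using one_sub_pow_sum_dvd_prod_mul hp hΦ (s.erase i₀)
        (fun i hi => hle i (mem_of_mem_erase hi)) j)
  have hW : (1 - x ^ p ^ k) * (1 - x) ^ (j + S) = 0 := by
    obtain ⟨g, hg⟩ := one_sub_dvd_one_sub_pow x (p ^ k)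
    rw [hg, mul_comm, ← mul_assoc, ← pow_succ, ← Nat.sub_add_cancel hnS, pow_add, hy,
      mul_zero, zero_mul]
  obtain ⟨q, hq⟩ := one_sub_pow_dvd_one_sub_pow x (hk ▸ pow_padicValNat_dvd : p ^ k ∣ t i₀)
  rw [hW, zero_dvd_iff] at hrest
  rw [← mul_prod_erase s _ hi₀, hq]
  linear_combination q * hrest

end

theorem stmt8_general (p : ℕ) [hp : Fact p.Prime] (k m : ℕ) (t : Fin m → ℕ)
    (hle : ∀ i, padicValNat p (t i) ≤ k)
    (hex : ∃ i, padicValNat p (t i) = k)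
    (j n : ℕ)
    (hn : (n : ℤ) ≤ (j : ℤ) +
        ((∑ l ∈ Finset.range (k + 1), (p : ℤ) ^ l *
            ((Finset.univ.filter fun i => padicValNat p (t i) = l).card : ℤ)) -
          ((p : ℤ) ^ k - 1))) :
    Ideal.Quotient.mk
        (Ideal.span {1 - (X : (IntLocAtPrime p)[X]) ^ p ^ (k + 1), (1 - X) ^ n})
      ((∏ i, (1 - X ^ t i)) * (1 - X) ^ j) = 0 := by
  obtain ⟨i₀, hi₀⟩ := hex
  set mk := Ideal.Quotient.mk
    (Ideal.span {1 - (X : (IntLocAtPrime p)[X]) ^ p ^ (k + 1), (1 - X) ^ n})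
  have hx : mk X ^ p ^ (k + 1) = 1 := by
    have h : mk (1 - X ^ p ^ (k + 1)) = 0 :=
      Ideal.Quotient.eq_zero_iff_mem.2 (Ideal.subset_span (by simp))
    rwa [map_sub, map_one, map_pow, sub_eq_zero, eq_comm] at h
  have hy : (1 - mk X) ^ n = 0 := by
    have h : mk ((1 - X) ^ n) = 0 :=
      Ideal.Quotient.eq_zero_iff_mem.2 (Ideal.subset_span (by simp))
    rwa [map_pow, map_sub, map_one] at h
  rw [sum_mul_card_filter_eq_sum (fun i _ => mem_range.2 (Nat.lt_succ_of_le (hle i)))] at hn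
  have hn' : n + p ^ k ≤ j + 1 + ∑ i, p ^ padicValNat p (t i) := by
    zify
    linarith
  simpa using
    prod_one_sub_pow_mul_eq_zero hp.out hx (fun i _ => hle i) (mem_univ i₀) hi₀ hy hn'

/-- optimality, Remark 4.2: with the notation of Lemma 4.1
(`m_l = #{i : ν_p(t i) = l}`, `δ = ∑_{l≤k} p^l m_l − (p^k − 1)`), for all `j ≥ 0` and
`1 ≤ n ≤ j + δ`, the image of `(∏ i (1 − X^(t i))) (1 − X)^j` in
`ℤ_(p)[X]/(1 − X^(p^(k+1)), (1 − X)^n)` is zero. -/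
theorem stmt8 (p : ℕ) [hp : Fact p.Prime] (k m : ℕ) (t : Fin m → ℕ)
    (ht : ∀ i, 0 < t i)
    (hle : ∀ i, padicValNat p (t i) ≤ k)
    (hex : ∃ i, padicValNat p (t i) = k)
    (j n : ℕ) (hn1 : 1 ≤ n)
    (hn : (n : ℤ) ≤ (j : ℤ) +
        ((∑ l ∈ Finset.range (k + 1), (p : ℤ) ^ l *
            ((Finset.univ.filter fun i => padicValNat p (t i) = l).card : ℤ)) -
          ((p : ℤ) ^ k - 1))) :
    Ideal.Quotient.mk
        (Ideal.span {1 - (X : (IntLocAtPrime p)[X]) ^ p ^ (k + 1), (1 - X) ^ n})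
      ((∏ i, (1 - X ^ t i)) * (1 - X) ^ j) = 0 :=
  stmt8_general p (hp := hp) k m t hle hex j n hn
end

section
/- Let p be a prime and k ≥ 1, r ≥ 1, s ≥ 1 integers, and write ζ_m = exp(2πi/p^m) for m ≥ 1. Suppose there exists a continuous map f : S(ℂ^r) → S(ℂ^s) between unit spheres such that f(ζ_{k+1}·v) = ζ_{k+1}^p·f(v) for all v ∈ S(ℂ^r), where λ·v denotes coordinatewise multiplication by the complex scalar λ. Then there exists a continuous map g : S(ℂ^{p·r}) → S(ℂ^{p·s}) such that g(ζ_{k+2}·w) = ζ_{k+2}^p·g(w) for all w ∈ S(ℂ^{p·r}). -/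
open Metric

/-- `ζ_m = exp(2πi/p^m)`, a primitive `p^m`-th root of unity. -/
noncomputable def zetaPow (p m : ℕ) : ℂ :=
  Complex.exp (2 * Real.pi * Complex.I / (p : ℂ) ^ m)

/-!
Write a point of `S(ℂ^{pr})` as a `p × r` matrix `x` and let `ζ = ζ_{k+2}`, `μ = ζ^{p^{k+1}}`.
Raising row `j` entrywise to the power `1 + j p^{k+1}` turns the scalar action of `ζ` into the
diagonal action by `ζ μ^j`. These are the distinct `p`-th roots of `ζ_{k+1} = ζ^p`, i.e. the
eigenvalues of the twisted cyclic shift of rows (row `0` receives `ζ_{k+1}` times row `p - 1`), and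
the Vandermonde matrix on them conjugates one action into the other. The twisted shift commutes
with applying `f` (extended to a cone map) to every row, once `ζ_{k+1}` is replaced by
`ζ_{k+1}^p` on the target: this is the `p`-fold join of `f`. The inverse steps, with the roots
`ζ^p μ^j` of `ζ_{k+1}^p`, bring the action back to scalar multiplication by `ζ_{k+1}`; the last
power map needs `ζ^p μ^j` to generate `ζ^p`, which is where `k ≥ 1` enters. No step vanishes off
`0`, so normalizing gives the map of spheres.
-/

open Function

namespace Matrix

section Rows

variable {m n n' α β : Type*}

def mapRows (φ : (n → α) → (n' → β)) (x : Matrix m n α) : Matrix m n' β :=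
  of fun j => φ (x j)

theorem eq_zero_of_mapRows_eq_zero [Zero α] [Zero β] {φ : (n → α) → (n' → β)}
    (hφ : ∀ v, φ v = 0 → v = 0) {x : Matrix m n α} (h : mapRows φ x = 0) : x = 0 :=
  funext fun j => hφ _ (congr_fun h j)

theorem continuous_mapRows [TopologicalSpace α] [TopologicalSpace β] {φ : (n → α) → (n' → β)}
    (hφ : Continuous φ) : Continuous (mapRows (m := m) φ) :=
  continuous_pi fun j => hφ.comp (continuous_apply j)

variable {R : Type*} [CommRing R]

def powRows (e : m → ℕ) (x : Matrix m n R) : Matrix m n R :=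
  of fun j i => x j i ^ e j

theorem powRows_diagonal_mul [Fintype m] [DecidableEq m] (e : m → ℕ) (c : m → R)
    (x : Matrix m n R) :
    powRows e (diagonal c * x) = diagonal (fun j => c j ^ e j) * powRows e x := by
  ext j i
  simp only [powRows, of_apply, diagonal_mul, mul_pow]

theorem eq_zero_of_powRows_eq_zero [IsReduced R] {e : m → ℕ} {x : Matrix m n R}
    (h : powRows e x = 0) : x = 0 :=
  ext fun j i => eq_zero_of_pow_eq_zero (congr_fun₂ h j i)

theorem continuous_powRows [TopologicalSpace R] [IsTopologicalRing R] (e : m → ℕ) :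
    Continuous (powRows (n := n) (R := R) e) :=
  continuous_matrix fun j i => (continuous_id.matrix_elem j i).pow (e j)

theorem eq_zero_of_mul_eq_zero_of_isUnit_det [Fintype m] [DecidableEq m] {A : Matrix m m R}
    (hA : IsUnit A.det) {x : Matrix m n R} (h : A * x = 0) : x = 0 := by
  rw [← nonsing_inv_mul_cancel_left A x hA, h, Matrix.mul_zero]

end Rows

section TwistedShift

variable {R : Type*} [CommRing R]

def twistedShift (p : ℕ) [NeZero p] (c : R) : Matrix (Fin p) (Fin p) R :=
  of fun j l => if l = j - 1 then (if j = 0 then c else 1) else 0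

variable {p : ℕ} [NeZero p]

theorem twistedShift_mul_apply {n : Type*} (c : R) (x : Matrix (Fin p) n R) (j : Fin p) (i : n) :
    (twistedShift p c * x) j i = (if j = 0 then c else 1) * x (j - 1) i := by
  simp only [mul_apply, twistedShift, of_apply, ite_mul, zero_mul, Finset.sum_ite_eq',
    Finset.mem_univ, if_true]

theorem _root_.Fin.ite_add_one_eq_zero_mul_pow (l : Fin p) {γ c : R} (hγ : γ ^ p = c) :
    (if l + 1 = 0 then c else 1) * γ ^ ((l + 1 : Fin p) : ℕ) = γ ^ ((l : ℕ) + 1) := by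
  obtain ⟨n, rfl⟩ := Nat.exists_eq_succ_of_ne_zero (NeZero.ne p)
  by_cases hl : l = Fin.last n
  · subst hl; simp [← hγ]
  · have hval := Fin.val_add_one_of_lt (Fin.lt_last_iff_ne_last.mpr hl)
    have hne : l + 1 ≠ 0 := fun h => by simp [h] at hval
    simp [hne, hval]

theorem vandermonde_mul_twistedShift {γ : Fin p → R} {c : R} (hγ : ∀ j, γ j ^ p = c) :
    vandermonde γ * twistedShift p c = diagonal γ * vandermonde γ := by
  ext m l
  have hsub : ∀ j : Fin p, (l = j - 1) ↔ (j = l + 1) := fun j => by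
    rw [eq_comm, sub_eq_iff_eq_add]
  rw [diagonal_mul, mul_apply]
  simp only [twistedShift, of_apply, hsub, vandermonde_apply, mul_ite, mul_zero,
    Finset.sum_ite_eq', Finset.mem_univ, if_true]
  rw [← mul_ite, mul_comm, Fin.ite_add_one_eq_zero_mul_pow l (hγ m), pow_succ']

theorem twistedShift_mul_inv_vandermonde {K : Type*} [Field K] {γ : Fin p → K} {c : K}
    (hinj : Injective γ) (hγ : ∀ j, γ j ^ p = c) :
    twistedShift p c * (vandermonde γ)⁻¹ = (vandermonde γ)⁻¹ * diagonal γ := by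
  have hV : IsUnit (vandermonde γ).det := (det_vandermonde_ne_zero_iff.mpr hinj).isUnit
  calc twistedShift p c * (vandermonde γ)⁻¹
      = (vandermonde γ)⁻¹ * (vandermonde γ * twistedShift p c) * (vandermonde γ)⁻¹ := by
        rw [nonsing_inv_mul_cancel_left _ _ hV]
    _ = (vandermonde γ)⁻¹ * diagonal γ := by
        rw [vandermonde_mul_twistedShift hγ, Matrix.mul_assoc, Matrix.mul_assoc,
          mul_nonsing_inv _ hV, Matrix.mul_one]

theorem mapRows_twistedShift_mul {n n' : Type*} {φ : (n → R) → (n' → R)} {c c' : R}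
    (hφ : ∀ v, φ (c • v) = c' • φ v) (x : Matrix (Fin p) n R) :
    mapRows φ (twistedShift p c * x) = twistedShift p c' * mapRows φ x := by
  have hrow : ∀ (d : R) (y : Matrix (Fin p) n R) j,
      (twistedShift p d * y) j = (if j = 0 then d else 1) • y (j - 1) := fun d y j =>
    funext fun i => twistedShift_mul_apply d y j i
  ext j l
  rw [twistedShift_mul_apply]
  by_cases hj : j = 0 <;> simp [mapRows, hrow, hj, hφ]

end TwistedShift

end Matrix

open Matrix

structure IsNonvanishingEquivariant {K X Y : Type*} [SMul K X] [SMul K Y] [Zero X] [Zero Y]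
    [TopologicalSpace X] [TopologicalSpace Y] (c c' : K) (h : X → Y) : Prop where
  continuous : Continuous h
  eq_zero : ∀ x, h x = 0 → x = 0
  map_smul : ∀ x, h (c • x) = c' • h x

section RootsOfUnity

variable {R : Type*} [CommRing R] {ζ : R} {p N : ℕ}

theorem IsPrimitiveRoot.pow_add_mul_pow (hζ : IsPrimitiveRoot ζ (N * p)) (t j : ℕ) :
    (ζ ^ (t + N * j)) ^ p = ζ ^ (t * p) := by
  rw [← pow_mul, add_mul, pow_add, mul_right_comm N j p, pow_mul ζ (N * p), hζ.pow_eq_one,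
    one_pow, mul_one]

variable [IsDomain R]

theorem IsPrimitiveRoot.injective_pow_add_mul (hζ : IsPrimitiveRoot ζ (N * p)) (hN : N ≠ 0)
    (t : ℕ) : Injective fun j : Fin p => ζ ^ (t + N * j) := by
  intro i j hij
  have hNp : N * p ≠ 0 := mul_ne_zero hN i.pos.ne'
  have hμ : IsPrimitiveRoot (ζ ^ N) p := hζ.pow (Nat.pos_of_ne_zero hNp) rfl
  simp only [pow_add, pow_mul] at hij
  exact Fin.ext <| hμ.pow_inj i.isLt j.isLt <|
    mul_left_cancel₀ (pow_ne_zero t (hζ.ne_zero hNp)) hij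

theorem IsPrimitiveRoot.exists_pow_one_add_mul_pow_eq {k : ℕ}
    (hζ : IsPrimitiveRoot ζ (p ^ (k + 1))) (hk : 1 ≤ k) (j : ℕ) :
    ∃ d, (ζ ^ (1 + p ^ k * j)) ^ d = ζ := by
  rcases Nat.eq_zero_or_pos p with rfl | hp
  · exact ⟨1, by simp [zero_pow (by omega : k ≠ 0)]⟩
  have : NeZero (p ^ (k + 1)) := ⟨by positivity⟩
  have hcop : (1 + p ^ k * j).Coprime (p ^ (k + 1)) := by
    refine Nat.Coprime.pow_right _ ?_
    obtain ⟨k', rfl⟩ := Nat.exists_eq_add_of_le' hk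
    rw [show p ^ (k' + 1) * j = (p ^ k' * j) * p by ring, Nat.coprime_add_mul_right_left]
    exact Nat.coprime_one_left p
  obtain ⟨d, -, hd⟩ := (hζ.pow_of_coprime _ hcop).eq_pow_of_pow_eq_one hζ.pow_eq_one
  exact ⟨d, hd⟩

end RootsOfUnity

section JoinPower

variable {K : Type*} [Field K] {p r s : ℕ}

noncomputable def joinPowerMap (ζ : K) (a b d : Fin p → ℕ) (φ : (Fin r → K) → (Fin s → K))
    (x : Matrix (Fin p) (Fin r) K) : Matrix (Fin p) (Fin s) K :=
  powRows d (vandermonde (fun j => ζ ^ b j) *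
    mapRows φ ((vandermonde fun j => ζ ^ a j)⁻¹ * powRows a x))

theorem joinPowerMap_smul [NeZero p] {ζ ω ω' : K} {a b d : Fin p → ℕ}
    (ha : Injective fun j => ζ ^ a j) (ha' : ∀ j, (ζ ^ a j) ^ p = ω)
    (hb : ∀ j, (ζ ^ b j) ^ p = ω') (hd : ∀ j, (ζ ^ b j) ^ d j = ω)
    {φ : (Fin r → K) → (Fin s → K)} (hφ : ∀ v, φ (ω • v) = ω' • φ v)
    (x : Matrix (Fin p) (Fin r) K) :
    joinPowerMap ζ a b d φ (ζ • x) = ω • joinPowerMap ζ a b d φ x := by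
  simp only [joinPowerMap]
  rw [smul_eq_diagonal_mul, powRows_diagonal_mul, ← Matrix.mul_assoc,
    ← twistedShift_mul_inv_vandermonde ha ha', Matrix.mul_assoc, mapRows_twistedShift_mul hφ,
    ← Matrix.mul_assoc, vandermonde_mul_twistedShift hb, Matrix.mul_assoc, powRows_diagonal_mul]
  simp only [hd, ← smul_eq_diagonal_mul]

theorem IsNonvanishingEquivariant.exists_joinPowerMap [TopologicalSpace K] [IsTopologicalRing K]
    {k : ℕ} (hp : p ≠ 0) (hk : 1 ≤ k) {ζ : K} (hζ : IsPrimitiveRoot ζ (p ^ (k + 2)))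
    {φ : (Fin r → K) → (Fin s → K)} (hφ : IsNonvanishingEquivariant (ζ ^ p) ((ζ ^ p) ^ p) φ) :
    ∃ h : Matrix (Fin p) (Fin r) K → Matrix (Fin p) (Fin s) K,
      IsNonvanishingEquivariant ζ (ζ ^ p) h := by
  have : NeZero p := ⟨hp⟩
  have hN : p ^ (k + 1) ≠ 0 := pow_ne_zero _ hp
  have hζ' : IsPrimitiveRoot ζ (p ^ (k + 1) * p) := by rwa [← pow_succ]
  have hω : IsPrimitiveRoot (ζ ^ p) (p ^ (k + 1)) := hζ.pow (by positivity) (pow_succ' _ _)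
  choose d hd using fun j : Fin p => hω.exists_pow_one_add_mul_pow_eq hk j
  have ha := hζ'.injective_pow_add_mul hN 1
  have hb := hζ'.injective_pow_add_mul hN p
  refine ⟨joinPowerMap ζ (fun j => 1 + p ^ (k + 1) * j) (fun j => p + p ^ (k + 1) * j) d φ,
    ⟨?_, fun x hx => ?_, joinPowerMap_smul ha (fun j => by rw [hζ'.pow_add_mul_pow, one_mul])
      (fun j => by rw [hζ'.pow_add_mul_pow, pow_mul]) (fun j => ?_) hφ.map_smul⟩⟩
  · exact (continuous_powRows d).comp <| continuous_const.matrix_mul <|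
      (continuous_mapRows hφ.continuous).comp <| continuous_const.matrix_mul (continuous_powRows _)
  · have hVa := isUnit_nonsing_inv_det _ (det_vandermonde_ne_zero_iff.mpr ha).isUnit
    have hVb := (det_vandermonde_ne_zero_iff.mpr hb).isUnit
    exact eq_zero_of_powRows_eq_zero <| eq_zero_of_mul_eq_zero_of_isUnit_det hVa <|
      eq_zero_of_mapRows_eq_zero hφ.eq_zero <| eq_zero_of_mul_eq_zero_of_isUnit_det hVb <|
      eq_zero_of_powRows_eq_zero hx
  · rw [show p + p ^ (k + 1) * j = p * (1 + p ^ k * j) by ring, pow_mul]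
    exact hd j

end JoinPower

section Cone

variable {E F : Type*} [NormedAddCommGroup E] [NormedSpace ℂ E] [NormedAddCommGroup F]
  [NormedSpace ℂ F]

open scoped Classical in
noncomputable def coneExtension (f : sphere (0 : E) 1 → sphere (0 : F) 1) (v : E) : F :=
  if hv : v = 0 then 0 else ‖v‖ • (f (homeomorphUnitSphereProd E ⟨v, hv⟩).1 : F)

variable {f : sphere (0 : E) 1 → sphere (0 : F) 1}

theorem norm_coneExtension (v : E) : ‖coneExtension f v‖ = ‖v‖ := by
  by_cases hv : v = 0
  · simp [coneExtension, hv]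
  · rw [coneExtension, dif_neg hv, norm_smul, norm_norm, norm_eq_of_mem_sphere, mul_one]

theorem continuous_coneExtension (hf : Continuous f) : Continuous (coneExtension f) := by
  refine continuous_iff_continuousAt.mpr fun v => ?_
  rcases eq_or_ne v 0 with rfl | hv
  · rw [ContinuousAt, show coneExtension f 0 = 0 from dif_pos rfl]
    exact squeeze_zero_norm (fun v => (norm_coneExtension v).le) tendsto_norm_zero
  · refine ContinuousOn.continuousAt ?_ (isOpen_compl_singleton.mem_nhds hv)
    rw [continuousOn_iff_continuous_domRestrict]
    have hres : ({0}ᶜ : Set E).domRestrict (coneExtension f) =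
        fun v : ({0}ᶜ : Set E) => ‖(v : E)‖ • (f (homeomorphUnitSphereProd E v).1 : F) :=
      funext fun v => dif_neg v.2
    rw [hres]
    exact continuous_subtype_val.norm.smul <| continuous_subtype_val.comp <| hf.comp <|
      continuous_fst.comp (homeomorphUnitSphereProd E).continuous

theorem coneExtension_smul {c c' : ℂ} (hc : ‖c‖ = 1)
    (hf : ∀ v w : sphere (0 : E) 1, (w : E) = c • (v : E) → (f w : F) = c' • (f v : F))
    (v : E) : coneExtension f (c • v) = c' • coneExtension f v := by
  rcases eq_or_ne v 0 with rfl | hv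
  · simp [coneExtension]
  have hcv : c • v ≠ 0 := smul_ne_zero (by rintro rfl; simp at hc) hv
  have hnorm : ‖c • v‖ = ‖v‖ := by rw [norm_smul, hc, one_mul]
  rw [coneExtension, coneExtension, dif_neg hcv, dif_neg hv, hf _ _ ?_, hnorm, smul_comm]
  simp only [homeomorphUnitSphereProd_apply_fst_coe, hnorm]
  exact smul_comm _ _ _

theorem isNonvanishingEquivariant_coneExtension (hf : Continuous f) {c c' : ℂ} (hc : ‖c‖ = 1)
    (hfc : ∀ v w : sphere (0 : E) 1, (w : E) = c • (v : E) → (f w : F) = c' • (f v : F)) :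
    IsNonvanishingEquivariant c c' (coneExtension f) where
  continuous := continuous_coneExtension hf
  eq_zero x hx := norm_eq_zero.mp (by rw [← norm_coneExtension (f := f), hx, norm_zero])
  map_smul := coneExtension_smul hc hfc

theorem IsNonvanishingEquivariant.exists_sphere_map {c c' : ℂ} (hc' : ‖c'‖ = 1) {h : E → F}
    (hh : IsNonvanishingEquivariant c c' h) :
    ∃ g : sphere (0 : E) 1 → sphere (0 : F) 1, Continuous g ∧
      ∀ v w : sphere (0 : E) 1, (w : E) = c • (v : E) → (g w : F) = c' • (g v : F) := by
  have hne : ∀ v : sphere (0 : E) 1, h v ≠ 0 := fun v hv =>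
    ne_zero_of_mem_unit_sphere v (hh.eq_zero _ hv)
  refine ⟨fun v => (homeomorphUnitSphereProd F ⟨h v, hne v⟩).1, ?_, fun v w hvw => ?_⟩
  · exact continuous_fst.comp <| (homeomorphUnitSphereProd F).continuous.comp <|
      (hh.continuous.comp continuous_subtype_val).subtype_mk _
  · simp only [homeomorphUnitSphereProd_apply_fst_coe, hvw, hh.map_smul, norm_smul, hc', one_mul]
    exact smul_comm _ _ _

end Cone

section Transport

variable {K X Y X' Y' : Type*} [Semiring K] [AddCommGroup X] [Module K X] [TopologicalSpace X]
  [AddCommGroup Y] [Module K Y] [TopologicalSpace Y] [AddCommGroup X'] [Module K X']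
  [TopologicalSpace X'] [AddCommGroup Y'] [Module K Y'] [TopologicalSpace Y']

theorem IsNonvanishingEquivariant.conj {c c' : K} {h : X → Y}
    (hh : IsNonvanishingEquivariant c c' h) (eX : X' ≃L[K] X) (eY : Y ≃L[K] Y') :
    IsNonvanishingEquivariant c c' (eY ∘ h ∘ eX) where
  continuous := eY.continuous.comp (hh.continuous.comp eX.continuous)
  eq_zero x hx := by simpa using hh.eq_zero _ ((map_eq_zero_iff eY eY.injective).mp hx)
  map_smul x := by simp [hh.map_smul]

end Transport

noncomputable def EuclideanSpace.finProdEquivMatrix (𝕜 : Type*) [RCLike 𝕜] (p n : ℕ) :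
    EuclideanSpace 𝕜 (Fin (p * n)) ≃L[𝕜] Matrix (Fin p) (Fin n) 𝕜 :=
  LinearEquiv.toContinuousLinearEquiv <| (WithLp.linearEquiv 2 𝕜 _).trans <|
    (LinearEquiv.funCongrLeft 𝕜 𝕜 finProdFinEquiv).trans <|
      (LinearEquiv.curry 𝕜 𝕜 _ _).trans (Matrix.ofLinearEquiv 𝕜)

theorem isPrimitiveRoot_zetaPow {p : ℕ} (hp : p ≠ 0) (m : ℕ) :
    IsPrimitiveRoot (zetaPow p m) (p ^ m) := by
  have := Complex.isPrimitiveRoot_exp (p ^ m) (pow_ne_zero m hp)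
  rwa [Nat.cast_pow] at this

theorem zetaPow_succ_pow {p : ℕ} (hp : p ≠ 0) (m : ℕ) : zetaPow p (m + 1) ^ p = zetaPow p m := by
  rw [zetaPow, zetaPow, ← Complex.exp_nat_mul]
  congr 1
  have : (p : ℂ) ≠ 0 := Nat.cast_ne_zero.mpr hp
  field_simp
  ring

theorem stmt9_general (p : ℕ) (hp : p.Prime) (k r s : ℕ) (hk : 1 ≤ k)
    (f : sphere (0 : EuclideanSpace ℂ (Fin r)) 1 → sphere (0 : EuclideanSpace ℂ (Fin s)) 1)
    (hf : Continuous f)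
    (hfequiv : ∀ v w : sphere (0 : EuclideanSpace ℂ (Fin r)) 1,
      (w : EuclideanSpace ℂ (Fin r)) = zetaPow p (k + 1) • (v : EuclideanSpace ℂ (Fin r)) →
      (f w : EuclideanSpace ℂ (Fin s)) =
        zetaPow p (k + 1) ^ p • (f v : EuclideanSpace ℂ (Fin s))) :
    ∃ g : sphere (0 : EuclideanSpace ℂ (Fin (p * r))) 1 →
        sphere (0 : EuclideanSpace ℂ (Fin (p * s))) 1,
      Continuous g ∧
        ∀ v w : sphere (0 : EuclideanSpace ℂ (Fin (p * r))) 1,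
          (w : EuclideanSpace ℂ (Fin (p * r))) =
            zetaPow p (k + 2) • (v : EuclideanSpace ℂ (Fin (p * r))) →
          (g w : EuclideanSpace ℂ (Fin (p * s))) =
            zetaPow p (k + 2) ^ p • (g v : EuclideanSpace ℂ (Fin (p * s))) := by
  have hζ := isPrimitiveRoot_zetaPow hp.ne_zero (k + 2)
  have hnorm : ‖zetaPow p (k + 1)‖ = 1 :=
    (isPrimitiveRoot_zetaPow hp.ne_zero (k + 1)).norm'_eq_one (pow_ne_zero _ hp.ne_zero)
  have hcone := isNonvanishingEquivariant_coneExtension hf hnorm hfequiv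
  have hrows := hcone.conj (EuclideanSpace.equiv (Fin r) ℂ).symm (EuclideanSpace.equiv (Fin s) ℂ)
  rw [← zetaPow_succ_pow hp.ne_zero (k + 1)] at hrows
  obtain ⟨h, hh⟩ := hrows.exists_joinPowerMap hp.ne_zero hk hζ
  refine (hh.conj (EuclideanSpace.finProdEquivMatrix ℂ p r)
    (EuclideanSpace.finProdEquivMatrix ℂ p s).symm).exists_sphere_map ?_
  rw [zetaPow_succ_pow hp.ne_zero (k + 1), hnorm]

/-- Lemma 6.2: if for `k ≥ 1`, `r, s ≥ 1` there is a continuous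
`f : S(ℂ^r) → S(ℂ^s)` with `f(ζ_{k+1} • v) = ζ_{k+1}^p • f(v)` (a `ℤ/p^{k+1}`-equivariant map
`S(rL) → S(sL^{⊗p})`), then there is a continuous `g : S(ℂ^{pr}) → S(ℂ^{ps})` with
`g(ζ_{k+2} • w) = ζ_{k+2}^p • g(w)`. -/
theorem stmt9 (p : ℕ) (hp : p.Prime) (k r s : ℕ) (hk : 1 ≤ k) (hr : 1 ≤ r) (hs : 1 ≤ s)
    (f : sphere (0 : EuclideanSpace ℂ (Fin r)) 1 → sphere (0 : EuclideanSpace ℂ (Fin s)) 1)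
    (hf : Continuous f)
    (hfequiv : ∀ v w : sphere (0 : EuclideanSpace ℂ (Fin r)) 1,
      (w : EuclideanSpace ℂ (Fin r)) = zetaPow p (k + 1) • (v : EuclideanSpace ℂ (Fin r)) →
      (f w : EuclideanSpace ℂ (Fin s)) =
        zetaPow p (k + 1) ^ p • (f v : EuclideanSpace ℂ (Fin s))) :
    ∃ g : sphere (0 : EuclideanSpace ℂ (Fin (p * r))) 1 →
        sphere (0 : EuclideanSpace ℂ (Fin (p * s))) 1,
      Continuous g ∧
        ∀ v w : sphere (0 : EuclideanSpace ℂ (Fin (p * r))) 1,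
          (w : EuclideanSpace ℂ (Fin (p * r))) =
            zetaPow p (k + 2) • (v : EuclideanSpace ℂ (Fin (p * r))) →
          (g w : EuclideanSpace ℂ (Fin (p * s))) =
            zetaPow p (k + 2) ^ p • (g v : EuclideanSpace ℂ (Fin (p * s))) :=
  stmt9_general p hp k r s hk f hf hfequiv
end
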